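/- arXiv:2306.04105 — 8 statements merged into one kernel-verified Lean document; each statement's English description precedes it below -/
import Mathlib

section
/- If a finite simple graph X is well-dominated and I is an independent set of vertices of X, then the graph obtained from X by deleting the closed neighborhood of I is also well-dominated. -/
open SimpleGraph

/-- `S` dominates `G`: every vertex is in `S` or adjacent to a vertex of `S`. -/
def Dominates {V : Type*} (G : SimpleGraph V) (S : Set V) : Prop :=
  ∀ v : V, v ∈ S ∨ ∃ u ∈ S, G.Adj u v

/-- `S` is a minimal dominating set of `G`. -/
def MinDom {V : Type*} (G : SimpleGraph V) (S : Set V) : Prop :=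
  Dominates G S ∧ ∀ T : Set V, T ⊂ S → ¬ Dominates G T

/-- `G` is well-dominated: all minimal dominating sets have the same cardinality. -/
def WellDom {V : Type*} (G : SimpleGraph V) : Prop :=
  ∀ S T : Set V, MinDom G S → MinDom G T → S.ncard = T.ncard

/-- `I` is an independent set of `G`. -/
def IndepSet {V : Type*} (G : SimpleGraph V) (I : Set V) : Prop :=
  ∀ a ∈ I, ∀ b ∈ I, ¬ G.Adj a b

/-- `I` is a maximal independent set of `G`. -/
def MaxIndep {V : Type*} (G : SimpleGraph V) (I : Set V) : Prop :=
  IndepSet G I ∧ ∀ J : Set V, IndepSet G J → I ⊆ J → J = I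

/-- The closed neighborhood `N[S]` of a set of vertices. -/
def closedNbhd {V : Type*} (G : SimpleGraph V) (S : Set V) : Set V :=
  {v | v ∈ S ∨ ∃ u ∈ S, G.Adj u v}

lemma lift_minDom {V : Type*} (X : SimpleGraph V) (I : Set V) (hI : IndepSet X I)
    (S : Set ↥(closedNbhd X I)ᶜ) (hS : MinDom (X.induce (closedNbhd X I)ᶜ) S) :
    MinDom X (I ∪ (Subtype.val '' S)) := by
  constructor
  · intro v
    by_cases hv : v ∈ closedNbhd X I
    · rcases hv with hv | ⟨u, hu, huv⟩
      · exact Or.inl (Or.inl hv)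
      · exact Or.inr ⟨u, Or.inl hu, huv⟩
    · rcases hS.1 ⟨v, hv⟩ with h | ⟨u, hu, huv⟩
      · exact Or.inl (Or.inr ⟨⟨v, hv⟩, h, rfl⟩)
      · exact Or.inr ⟨u.val, Or.inr ⟨u, hu, rfl⟩, huv⟩
  · intro T hT hTdom
    obtain ⟨hTsub, hns⟩ := hT
    obtain ⟨d, hdD, hdT⟩ := Set.not_subset.mp hns
    rcases hdD with hdI | ⟨s, hsS, rfl⟩
    · -- d ∈ I, but d must be dominated by T
      rcases hTdom d with h | ⟨u, huT, huv⟩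
      · exact hdT h
      · rcases hTsub huT with huI | ⟨s, hsS, rfl⟩
        · exact hI u huI d hdI huv
        · exact s.prop (Or.inr ⟨d, hdI, huv.symm⟩)
    · -- d = ↑s with s ∈ S: use a private neighbor of s
      have hsub : S \ {s} ⊂ S := Set.sdiff_singleton_ssubset.mpr hsS
      have hnd := hS.2 (S \ {s}) hsub
      rw [Dominates, not_forall] at hnd
      obtain ⟨v, hv⟩ := hnd
      push_neg at hv
      obtain ⟨hv1, hv2⟩ := hv
      rcases hTdom v.val with h | ⟨u, huT, huv⟩
      · rcases hTsub h with hvI | ⟨s', hs'S, hs'v⟩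
        · exact v.prop (Or.inl hvI)
        · have : s' = v := Subtype.ext hs'v
          subst this
          have hne : s' ≠ s := by rintro rfl; exact hdT h
          exact hv1 ⟨hs'S, hne⟩
      · rcases hTsub huT with huI | ⟨s', hs'S, rfl⟩
        · exact v.prop (Or.inr ⟨u, huI, huv⟩)
        · have hne : s' ≠ s := by rintro rfl; exact hdT huT
          exact hv2 s' ⟨hs'S, hne⟩ huv

theorem stmt0 {V : Type*} [Fintype V] (X : SimpleGraph V)
    (hX : WellDom X) (I : Set V) (hI : IndepSet X I) :
    WellDom (X.induce (closedNbhd X I)ᶜ) := by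
  intro S T hS hT
  have key := hX _ _ (lift_minDom X I hI S hS) (lift_minDom X I hI T hT)
  have hdisj : ∀ (U : Set ↥(closedNbhd X I)ᶜ), Disjoint I (Subtype.val '' U) := by
    intro U
    rw [Set.disjoint_right]
    rintro v ⟨u, _, rfl⟩
    exact fun h => u.prop (Or.inl h)
  rw [Set.ncard_union_eq (hdisj S) (Set.toFinite _) (Set.toFinite _),
      Set.ncard_union_eq (hdisj T) (Set.toFinite _) (Set.toFinite _),
      Set.ncard_image_of_injective _ Subtype.val_injective,
      Set.ncard_image_of_injective _ Subtype.val_injective] at key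
  exact Nat.add_left_cancel key
end

section
/- If I is an independent set of a finite simple graph X and D is a minimal dominating set of X - N[I], then I ∪ D is a minimal dominating set of X. -/
open SimpleGraph

theorem stmt3 {V : Type*} [Fintype V] (X : SimpleGraph V) (I : Set V)
    (hI : IndepSet X I) (D : Set ((closedNbhd X I)ᶜ : Set V))
    (hD : MinDom (X.induce (closedNbhd X I)ᶜ) D) :
    MinDom X (I ∪ (Subtype.val '' D)) := by
  obtain ⟨hDdom, hDmin⟩ := hD
  constructor
  · intro v
    by_cases hv : v ∈ closedNbhd X I
    · rcases hv with h | ⟨u, hu, hadj⟩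
      · exact Or.inl (Or.inl h)
      · exact Or.inr ⟨u, Or.inl hu, hadj⟩
    · rcases hDdom ⟨v, hv⟩ with h | ⟨u, hu, hadj⟩
      · exact Or.inl (Or.inr ⟨⟨v, hv⟩, h, rfl⟩)
      · exact Or.inr ⟨u, Or.inr ⟨u, hu, rfl⟩, hadj⟩
  · intro T hT hTdom
    obtain ⟨x, hx, hxT⟩ := Set.exists_of_ssubset hT
    have hsub := hT.1
    rcases hx with hxI | ⟨d, hdD, rfl⟩
    · rcases hTdom x with h | ⟨u, huT, hadj⟩
      · exact hxT h
      · rcases hsub huT with huI | ⟨e, heD, rfl⟩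
        · exact hI u huI x hxI hadj
        · exact e.2 (Or.inr ⟨x, hxI, hadj.symm⟩)
    · refine hDmin (Subtype.val ⁻¹' T ∩ D) ?_ ?_
      · rw [Set.ssubset_def]
        refine ⟨Set.inter_subset_right, fun h => hxT (h hdD).1⟩
      · intro v
        rcases hTdom ↑v with hvT | ⟨u, huT, hadj⟩
        · left
          refine ⟨hvT, ?_⟩
          rcases hsub hvT with hvI | ⟨e, heD, he⟩
          · exact absurd (Or.inl hvI) v.2
          · rwa [Subtype.ext he] at heD
        · rcases hsub huT with huI | ⟨e, heD, rfl⟩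
          · exact absurd (Or.inr ⟨u, huI, hadj⟩) v.2
          · exact Or.inr ⟨e, ⟨huT, heD⟩, hadj⟩
end

section
/- If I_G is a maximal independent set of G and I_H is a maximal independent set of H, then I_G × I_H is an independent set in the Cartesian product G □ H, and the graph obtained from G □ H by removing the closed neighborhood of I_G × I_H equals the Cartesian product (G - I_G) □ (H - I_H). -/
open SimpleGraph

/-!
A vertex `(g, h)` of `G □ H` misses `N[I_G × I_H]` exactly when `g ∉ I_G` and `h ∉ I_H`: if,
say, `g ∈ I_G`, then `h` is in `I_H` or adjacent to some `w ∈ I_H`, because a maximal independent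
set dominates, so `(g, h)` lies in `N[I_G × I_H]`.
Removing `N[I_G × I_H]` thus leaves the product vertex set `I_Gᶜ × I_Hᶜ`, on which `G □ H`
induces the product of the induced graphs.
-/

section

variable {V W : Type*} {G : SimpleGraph V} {H : SimpleGraph W}

theorem MaxIndep.dominates {I : Set V} (hI : MaxIndep G I) : Dominates G I := by
  intro v
  by_contra! hv
  obtain ⟨hvI, hvAdj⟩ := hv
  have hindep : IndepSet G (insert v I) := by
    rintro a (rfl | ha) b (rfl | hb) hab
    · exact G.irrefl hab
    · exact hvAdj b hb hab.symm
    · exact hvAdj a ha hab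
    · exact hI.1 a ha b hb hab
  exact hvI (hI.2 _ hindep (Set.subset_insert v I) ▸ Set.mem_insert v I)

theorem IndepSet.prod_boxProd {s : Set V} {t : Set W} (hs : IndepSet G s) (ht : IndepSet H t) :
    IndepSet (G □ H) (s ×ˢ t) := by
  rintro ⟨a₁, a₂⟩ ⟨ha₁, ha₂⟩ ⟨b₁, b₂⟩ ⟨hb₁, hb₂⟩ (⟨hadj, -⟩ | ⟨hadj, -⟩)
  · exact hs a₁ ha₁ b₁ hb₁ hadj
  · exact ht a₂ ha₂ b₂ hb₂ hadj

theorem compl_closedNbhd_prod_boxProd {s : Set V} {t : Set W}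
    (hs : Dominates G s) (ht : Dominates H t) :
    (closedNbhd (G □ H) (s ×ˢ t))ᶜ = sᶜ ×ˢ tᶜ := by
  ext ⟨g, h⟩
  simp only [closedNbhd, Set.mem_compl_iff, Set.mem_ofPred_eq, Set.mem_prod, boxProd_adj,
    not_or, not_exists]
  constructor
  · rintro ⟨hnotin, hnotadj⟩
    constructor
    · intro hg
      rcases ht h with hh | ⟨w, hw, hadj⟩
      · exact hnotin ⟨hg, hh⟩
      · exact hnotadj (g, w) ⟨⟨hg, hw⟩, Or.inr ⟨hadj, rfl⟩⟩
    · intro hh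
      rcases hs g with hg | ⟨u, hu, hadj⟩
      · exact hnotin ⟨hg, hh⟩
      · exact hnotadj (u, h) ⟨⟨hu, hh⟩, Or.inl ⟨hadj, rfl⟩⟩
  · rintro ⟨hg, hh⟩
    refine ⟨fun hgh => hg hgh.1, ?_⟩
    rintro ⟨u, w⟩ ⟨⟨hu, hw⟩, ⟨-, rfl⟩ | ⟨-, rfl⟩⟩
    · exact hh hw
    · exact hg hu

def induceProdBoxProdIso (s : Set V) (t : Set W) :
    (G □ H).induce (s ×ˢ t) ≃g G.induce s □ H.induce t where
  toEquiv := Equiv.Set.prod s t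
  map_rel_iff' {x y} := by
    simp only [comap_adj, Function.Embedding.subtype_apply, boxProd_adj, Subtype.ext_iff]
    rfl

end

theorem stmt6 {V W : Type*} (G : SimpleGraph V) (H : SimpleGraph W)
    (IG : Set V) (IH : Set W) (hG : MaxIndep G IG) (hH : MaxIndep H IH) :
    IndepSet (G □ H) (IG ×ˢ IH) ∧
    (closedNbhd (G □ H) (IG ×ˢ IH))ᶜ = (IGᶜ ×ˢ IHᶜ : Set (V × W)) ∧
    Nonempty (((G □ H).induce (closedNbhd (G □ H) (IG ×ˢ IH))ᶜ) ≃g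
      ((G.induce IGᶜ) □ (H.induce IHᶜ))) := by
  have hcompl := compl_closedNbhd_prod_boxProd (G := G) (H := H) hG.dominates hH.dominates
  refine ⟨hG.1.prod_boxProd hH.1, hcompl, ?_⟩
  rw [hcompl]
  exact ⟨induceProdBoxProdIso IGᶜ IHᶜ⟩
end

section
/- If G □ H is well-dominated, then for any maximal independent sets I_G of G and I_H of H, the product (G - I_G) □ (H - I_H) is well-dominated. -/
open SimpleGraph

/-- A maximal independent set is dominating. -/
lemma maxIndep_dom {V : Type*} {G : SimpleGraph V} {I : Set V}
    (h : MaxIndep G I) : Dominates G I := by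
  intro v
  by_contra hc
  push_neg at hc
  obtain ⟨hv, hadj⟩ := hc
  have hindep : IndepSet G (insert v I) := by
    intro a ha b hb hab
    rcases ha with rfl | ha
    · rcases hb with rfl | hb
      · exact G.irrefl hab
      · exact hadj b hb hab.symm
    · rcases hb with rfl | hb
      · exact hadj a ha hab
      · exact h.1 a ha b hb hab
  have := h.2 (insert v I) hindep (Set.subset_insert v I)
  exact hv (this ▸ Set.mem_insert v I)

theorem stmt7 {V W : Type*} [Fintype V] [Fintype W]
    (G : SimpleGraph V) (H : SimpleGraph W) (h : WellDom (G □ H))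
    (IG : Set V) (IH : Set W) (hG : MaxIndep G IG) (hH : MaxIndep H IH) :
    WellDom ((G.induce IGᶜ) □ (H.induce IHᶜ)) := by
  classical
  set e : (↥IGᶜ × ↥IHᶜ) → V × W := fun p => (p.1.1, p.2.1) with he
  have einj : Function.Injective e := by
    intro p q hpq
    simp only [he, Prod.mk.injEq] at hpq
    exact Prod.ext (Subtype.ext hpq.1) (Subtype.ext hpq.2)
  set A : Set (V × W) := IG ×ˢ IH with hA
  have adj_lift : ∀ p q, ((G.induce IGᶜ) □ (H.induce IHᶜ)).Adj p q →
      (G □ H).Adj (e p) (e q) := by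
    intro p q hpq
    rw [boxProd_adj] at hpq ⊢
    rcases hpq with ⟨h1, h2⟩ | ⟨h1, h2⟩
    · exact Or.inl ⟨h1, congrArg Subtype.val h2⟩
    · exact Or.inr ⟨h1, congrArg Subtype.val h2⟩
  have adj_restrict : ∀ p q, (G □ H).Adj (e p) (e q) →
      ((G.induce IGᶜ) □ (H.induce IHᶜ)).Adj p q := by
    intro p q hpq
    rw [boxProd_adj] at hpq ⊢
    rcases hpq with ⟨h1, h2⟩ | ⟨h1, h2⟩
    · exact Or.inl ⟨h1, Subtype.ext h2⟩
    · exact Or.inr ⟨h1, Subtype.ext h2⟩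
  -- lifting minimal dominating sets
  have lift : ∀ D, MinDom ((G.induce IGᶜ) □ (H.induce IHᶜ)) D →
      MinDom (G □ H) (A ∪ e '' D) := by
    intro D hD
    constructor
    · -- domination
      rintro ⟨g, w⟩
      by_cases hg : g ∈ IG
      · by_cases hw : w ∈ IH
        · exact Or.inl (Or.inl ⟨hg, hw⟩)
        · rcases maxIndep_dom hH w with hw' | ⟨u, hu, hadj⟩
          · exact absurd hw' hw
          · exact Or.inr ⟨(g, u), Or.inl ⟨hg, hu⟩,
              Or.inr ⟨hadj, rfl⟩⟩
      · by_cases hw : w ∈ IH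
        · rcases maxIndep_dom hG g with hg' | ⟨u, hu, hadj⟩
          · exact absurd hg' hg
          · exact Or.inr ⟨(u, w), Or.inl ⟨hu, hw⟩,
              Or.inl ⟨hadj, rfl⟩⟩
        · -- both in complements
          set q : ↥IGᶜ × ↥IHᶜ := (⟨g, hg⟩, ⟨w, hw⟩) with hq
          rcases hD.1 q with hqD | ⟨u, hu, hadj⟩
          · exact Or.inl (Or.inr ⟨q, hqD, rfl⟩)
          · exact Or.inr ⟨e u, Or.inr ⟨u, hu, rfl⟩, adj_lift u q hadj⟩
    · -- minimality
      intro T hT hTdom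
      -- A ⊆ T
      have hAT : A ⊆ T := by
        rintro ⟨g, w⟩ ⟨hg, hw⟩
        rcases hTdom (g, w) with hmem | ⟨u, huT, hadj⟩
        · exact hmem
        · exfalso
          have huS := hT.1 huT
          rw [boxProd_adj] at hadj
          rcases huS with ⟨hu1, hu2⟩ | ⟨p, hpD, rfl⟩
          · rcases hadj with ⟨h1, _⟩ | ⟨h1, _⟩
            · exact hG.1 u.1 hu1 g hg h1
            · exact hH.1 u.2 hu2 w hw h1
          · rcases hadj with ⟨_, h2⟩ | ⟨_, h2⟩
            · apply p.2.2
              have h2' : (↑p.2 : W) = w := h2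
              rw [h2']; exact hw
            · apply p.1.2
              have h2' : (↑p.1 : V) = g := h2
              rw [h2']; exact hg
      set T' : Set (↥IGᶜ × ↥IHᶜ) := e ⁻¹' T with hT'
      have hT'D : T' ⊆ D := by
        intro q hqT'
        rcases hT.1 hqT' with ⟨h1, _⟩ | ⟨p, hpD, hpe⟩
        · exact absurd h1 q.1.2
        · exact einj hpe ▸ hpD
      have hT'dom : Dominates ((G.induce IGᶜ) □ (H.induce IHᶜ)) T' := by
        intro q
        rcases hTdom (e q) with hmem | ⟨u, huT, hadj⟩
        · exact Or.inl hmem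
        · rcases hT.1 huT with ⟨h1, h2⟩ | ⟨p, _, rfl⟩
          · exfalso
            rw [boxProd_adj] at hadj
            rcases hadj with ⟨_, hh2⟩ | ⟨_, hh2⟩
            · apply q.2.2
              have hh2' : u.2 = (↑q.2 : W) := hh2
              rw [← hh2']; exact h2
            · apply q.1.2
              have hh2' : u.1 = (↑q.1 : V) := hh2
              rw [← hh2']; exact h1
          · exact Or.inr ⟨p, huT, adj_restrict p q hadj⟩
      have hne : T' ≠ D := by
        intro heq
        have hsub : A ∪ e '' D ⊆ T := by
          rintro x (hx | ⟨p, hpD, rfl⟩)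
          · exact hAT hx
          · have hp : p ∈ T' := by rw [heq]; exact hpD
            exact hp
        exact hT.2 hsub
      exact hD.2 T' (Set.ssubset_iff_subset_ne.mpr ⟨hT'D, hne⟩) hT'dom
  intro S T hS hT
  have h1 := h _ _ (lift S hS) (lift T hT)
  have card : ∀ D : Set (↥IGᶜ × ↥IHᶜ),
      (A ∪ e '' D).ncard = A.ncard + D.ncard := by
    intro D
    rw [Set.ncard_union_eq ?_ (Set.toFinite _) (Set.toFinite _),
      Set.ncard_image_of_injective _ einj]
    rw [Set.disjoint_left]
    rintro ⟨g, w⟩ ⟨hg, _⟩ ⟨p, _, hpe⟩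
    apply p.1.2
    have hpe' : (↑p.1 : V) = g := congrArg Prod.fst hpe
    rw [hpe']; exact hg
  rw [card S, card T] at h1
  exact Nat.add_left_cancel h1
end

section
/- Let X be a connected graph of order at least 3. If P_3 □ X is well-dominated, then X is the complete graph K_3. -/
/-!
Let `n = |V|`. Putting a maximal independent set `I` of `X` on the first copy of `X` in
`P₃ □ X` and `V \ I` on the third gives a minimal dominating set with `n` vertices, so every
minimal dominating set has `n` vertices. The independent dominating sets `I ∪ B ∪ I` and
`B ∪ I ∪ B` (layer by layer, `B` maximal independent in `X - I`) then force `3 |I| = n`.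

Consequently, for `v ∈ I` the vertices outside `N[I - v]` form a clique `P(v) ∋ v` with at least
three vertices: an edge-free `P(v) - v` would yield a dominating layering with fewer than `n`
vertices, and two non-adjacent vertices of `P(v) - v` an independent set larger than `I`.
Counting shows that the cliques `P(v)` partition `V` into triangles. An edge `z w` between
`P(a)` and `P(c)`, `a ≠ c`, is impossible, since exchanging `a` for `z` in `I` would leave `c`
with only two private vertices. As `X` is connected, `I` is a single vertex and `X = P(v)` is a
triangle.
-/

open SimpleGraph

section Domination

variable {V : Type*} {G : SimpleGraph V} {S T U : Set V} {v z : V}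

theorem IndepSet.mono (hS : IndepSet G S) (hTS : T ⊆ S) : IndepSet G T :=
  fun a ha b hb => hS a (hTS ha) b (hTS hb)

theorem IndepSet.insert (hS : IndepSet G S) (hv : ∀ u ∈ S, ¬G.Adj u v) :
    IndepSet G (insert v S) := by
  rintro a (rfl | ha) b (rfl | hb)
  · exact G.irrefl
  · exact fun h => hv b hb h.symm
  · exact hv a ha
  · exact hS a ha b hb

theorem mem_closedNbhd_of_eq_or_adj {u : V} (hu : u ∈ S) (h : u = z ∨ G.Adj u z) :
    z ∈ closedNbhd G S :=
  h.elim (fun h => Or.inl (h ▸ hu)) fun h => Or.inr ⟨u, hu, h⟩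

theorem Dominates.exists_eq_or_adj (hS : Dominates G S) (z : V) : ∃ u ∈ S, u = z ∨ G.Adj u z :=
  (hS z).elim (fun h => ⟨z, h, Or.inl rfl⟩) fun ⟨u, hu, h⟩ => ⟨u, hu, Or.inr h⟩

theorem minDom_of_forall_exists_private (hS : Dominates G S)
    (hpriv : ∀ s ∈ S, ∃ w, ∀ u ∈ S, u = w ∨ G.Adj u w → u = s) : MinDom G S := by
  refine ⟨hS, fun T hTS hT => ?_⟩
  obtain ⟨s, hsS, hsT⟩ := Set.exists_of_ssubset hTS
  obtain ⟨w, hw⟩ := hpriv s hsS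
  obtain ⟨u, huT, huw⟩ := hT.exists_eq_or_adj w
  exact hsT (hw u (hTS.subset huT) huw ▸ huT)

theorem IndepSet.minDom (hind : IndepSet G S) (hS : Dominates G S) : MinDom G S :=
  minDom_of_forall_exists_private hS fun s hs =>
    ⟨s, fun u hu h => h.elim id fun hadj => (hind u hu s hs hadj).elim⟩

theorem exists_indepSet_subset_closedNbhd [Finite V] (hS : IndepSet G S) (hSU : S ⊆ U) :
    ∃ B, IndepSet G B ∧ S ⊆ B ∧ B ⊆ U ∧ U ⊆ closedNbhd G B := by
  obtain ⟨B, hSB, ⟨hB, hBU⟩, hmax⟩ :=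
    Finite.exists_le_maximal (p := fun B => IndepSet G B ∧ B ⊆ U) ⟨hS, hSU⟩
  refine ⟨B, hB, hSB, hBU, fun v hv => ?_⟩
  by_contra hvB
  simp only [closedNbhd, Set.mem_ofPred_eq, not_or, not_exists, not_and] at hvB
  exact hvB.1 (hmax ⟨hB.insert hvB.2, Set.insert_subset hv hBU⟩ (Set.subset_insert v B)
    (Set.mem_insert v B))

theorem exists_indepSet_dominates [Finite V] (hS : IndepSet G S) :
    ∃ I, IndepSet G I ∧ Dominates G I ∧ S ⊆ I := by
  obtain ⟨I, hI, hSI, -, hdom⟩ := exists_indepSet_subset_closedNbhd hS (Set.subset_univ S)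
  exact ⟨I, hI, fun v => hdom (Set.mem_univ v), hSI⟩

end Domination

theorem Set.PairwiseDisjoint.biUnion_eq_univ_of_le_ncard {ι α : Type*} [Finite α] {t : Set ι}
    {s : ι → Set α} {k : ℕ} (ht : t.Finite) (hdisj : t.PairwiseDisjoint s)
    (hk : ∀ i ∈ t, k ≤ (s i).ncard) (hcard : Nat.card α ≤ k * t.ncard) :
    (⋃ i ∈ t, s i) = Set.univ ∧ ∀ i ∈ t, (s i).ncard = k := by
  obtain ⟨t, rfl⟩ := ht.exists_finset_coe
  have hunion : (⋃ i ∈ (t : Set ι), s i).ncard = ∑ i ∈ t, (s i).ncard := by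
    rw [Set.Finite.ncard_biUnion t.finite_toSet (fun i _ => Set.toFinite (s i)) hdisj,
      finsum_mem_coe_finset]
  have hle : ∑ i ∈ t, k ≤ ∑ i ∈ t, (s i).ncard := Finset.sum_le_sum hk
  have hunion_le : (⋃ i ∈ (t : Set ι), s i).ncard ≤ Nat.card α := by
    rw [← Set.ncard_univ]; exact Set.ncard_le_ncard (Set.subset_univ _)
  rw [Set.ncard_coe_finset] at hcard
  rw [Finset.sum_const, smul_eq_mul, mul_comm] at hle
  refine ⟨Set.eq_of_subset_of_ncard_le (Set.subset_univ _) ?_, fun i hi => ?_⟩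
  · rw [Set.ncard_univ]; omega
  · refine ((Finset.sum_eq_sum_iff_of_le hk).mp ?_ i hi).symm
    rw [Finset.sum_const, smul_eq_mul, mul_comm]; omega

section Layers

variable {W V : Type*} {H : SimpleGraph W} {X : SimpleGraph V}

def layers (S : W → Set V) : Set (W × V) := {p | p.2 ∈ S p.1}

@[simp]
theorem mem_layers {S : W → Set V} {p : W × V} : p ∈ layers S ↔ p.2 ∈ S p.1 := Iff.rfl

theorem ncard_layers [Fintype W] [Finite V] (S : W → Set V) :
    (layers S).ncard = ∑ i, (S i).ncard := by
  rw [← Nat.card_coe_set_eq]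
  exact (Nat.card_congr (Equiv.subtypeProdEquivSigmaSubtype fun i v => v ∈ S i)).trans
    Nat.card_sigma

theorem indepSet_layers {S : W → Set V} (hS : ∀ i, IndepSet X (S i))
    (hdisj : ∀ i j, H.Adj i j → Disjoint (S i) (S j)) : IndepSet (H □ X) (layers S) := by
  rintro ⟨i, u⟩ hu ⟨j, v⟩ hv hadj
  rcases boxProd_adj.mp hadj with ⟨hij, rfl⟩ | ⟨huv, rfl⟩
  · exact Set.disjoint_left.mp (hdisj i j hij) hu hv
  · exact hS i u hu v hv huv

theorem dominates_layers {S : W → Set V}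
    (hS : ∀ i v, v ∈ closedNbhd X (S i) ∨ ∃ j, H.Adj j i ∧ v ∈ S j) :
    Dominates (H □ X) (layers S) := by
  rintro ⟨i, v⟩
  rcases hS i v with (hv | ⟨u, hu, huv⟩) | ⟨j, hji, hv⟩
  · exact Or.inl hv
  · exact Or.inr ⟨(i, u), hu, boxProd_adj.mpr (Or.inr ⟨huv, rfl⟩)⟩
  · exact Or.inr ⟨(j, v), hv, boxProd_adj.mpr (Or.inl ⟨hji, rfl⟩)⟩

end Layers

section PathThree

variable {V : Type*} {X : SimpleGraph V} {A B C : Set V}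

theorem pathGraph_three_adj {i j : Fin 3} : (pathGraph 3).Adj i j ↔ i ≠ j ∧ (i = 1 ∨ j = 1) := by
  rw [pathGraph_adj]; fin_cases i <;> fin_cases j <;> decide

theorem ncard_layers_three [Finite V] :
    (layers ![A, B, C]).ncard = A.ncard + B.ncard + C.ncard := by
  rw [ncard_layers, Fin.sum_univ_three]; rfl

theorem minDom_layers_three (hA : IndepSet X A) (hB : IndepSet X B) (hC : IndepSet X C)
    (hAB : Disjoint A B) (hBC : Disjoint B C)
    (h₀ : ∀ v, v ∈ closedNbhd X A ∨ v ∈ B) (h₁ : ∀ v, v ∈ closedNbhd X B ∨ v ∈ A ∨ v ∈ C)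
    (h₂ : ∀ v, v ∈ closedNbhd X C ∨ v ∈ B) :
    MinDom (pathGraph 3 □ X) (layers ![A, B, C]) := by
  refine IndepSet.minDom (indepSet_layers ?_ ?_) (dominates_layers ?_)
  · intro i; fin_cases i <;> assumption
  · intro i j hij
    rw [pathGraph_three_adj] at hij
    fin_cases i <;> fin_cases j <;> simp_all [disjoint_comm]
  · intro i v
    fin_cases i
    · exact (h₀ v).imp_right fun h => ⟨1, by simp [pathGraph_three_adj], h⟩
    · exact (h₁ v).imp_right fun h => h.elim (fun h => ⟨0, by simp [pathGraph_three_adj], h⟩)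
        fun h => ⟨2, by simp [pathGraph_three_adj], h⟩
    · exact (h₂ v).imp_right fun h => ⟨1, by simp [pathGraph_three_adj], h⟩

theorem minDom_layers_compl {I : Set V} (hI : IndepSet X I) (hdom : Dominates X I)
    (hX : ∀ v, ∃ u, X.Adj v u) : MinDom (pathGraph 3 □ X) (layers ![I, ∅, Iᶜ]) := by
  refine minDom_of_forall_exists_private (dominates_layers ?_) ?_
  · intro i v
    fin_cases i
    · exact Or.inl (hdom v)
    · by_cases hv : v ∈ I
      · exact Or.inr ⟨0, by simp [pathGraph_three_adj], hv⟩
      · exact Or.inr ⟨2, by simp [pathGraph_three_adj], hv⟩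
    · refine Or.inl ?_
      by_cases hv : v ∈ I
      · obtain ⟨u, hvu⟩ := hX v
        exact Or.inr ⟨u, fun hu => hI v hv u hu hvu, hvu.symm⟩
      · exact Or.inl hv
  · -- `(1, x)` is dominated only by `(0, x)` or `(2, x)`, exactly one of which lies in the set.
    rintro ⟨i, x⟩ hx
    refine ⟨(1, x), ?_⟩
    rintro ⟨j, y⟩ hy (h | h)
    · cases h; simp at hy
    · rcases boxProd_adj.mp h with ⟨hj, rfl⟩ | ⟨-, rfl⟩
      · rw [pathGraph_three_adj] at hj
        fin_cases i <;> fin_cases j <;> simp_all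
      · simp at hy

end PathThree

section PrivateNbhd

variable {V : Type*} {X : SimpleGraph V} {I : Set V} {v w z : V}

/-- The complement of `N[I \ {v}]`; for a dominating `I ∋ v` it is the closed private
neighbourhood of `v`. -/
def privateNbhd (X : SimpleGraph V) (I : Set V) (v : V) : Set V := (closedNbhd X (I \ {v}))ᶜ

theorem notMem_of_mem_privateNbhd (hz : z ∈ privateNbhd X I v) : z ∉ I \ {v} :=
  fun h => hz (Or.inl h)

theorem not_adj_of_mem_privateNbhd (hz : z ∈ privateNbhd X I v) : ∀ u ∈ I \ {v}, ¬X.Adj u z :=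
  fun u hu h => hz (Or.inr ⟨u, hu, h⟩)

theorem eq_of_mem_privateNbhd (hw : w ∈ I) (hwz : w = z ∨ X.Adj w z)
    (hz : z ∈ privateNbhd X I v) : w = v := by
  by_contra hne
  exact hz (mem_closedNbhd_of_eq_or_adj ⟨hw, hne⟩ hwz)

theorem self_mem_privateNbhd (hI : IndepSet X I) (hv : v ∈ I) : v ∈ privateNbhd X I v := by
  rintro (⟨-, hne⟩ | ⟨u, ⟨hu, -⟩, huv⟩)
  · exact hne rfl
  · exact hI u hu v hv huv

theorem eq_or_adj_of_mem_privateNbhd (hdom : Dominates X I) (hz : z ∈ privateNbhd X I v) :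
    v = z ∨ X.Adj v z := by
  obtain ⟨w, hw, hwz⟩ := hdom.exists_eq_or_adj z
  exact eq_of_mem_privateNbhd hw hwz hz ▸ hwz

theorem pairwiseDisjoint_privateNbhd (hdom : Dominates X I) :
    I.PairwiseDisjoint (privateNbhd X I) := by
  intro a _ b _ hab
  refine Set.disjoint_left.mpr fun z hza hzb => hab ?_
  obtain ⟨w, hw, hwz⟩ := hdom.exists_eq_or_adj z
  exact (eq_of_mem_privateNbhd hw hwz hza).symm.trans (eq_of_mem_privateNbhd hw hwz hzb)

theorem indepSet_exchange (hI : IndepSet X I) (hz : z ∈ privateNbhd X I v) :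
    IndepSet X (insert z (I \ {v})) :=
  (hI.mono Set.sdiff_subset).insert (not_adj_of_mem_privateNbhd hz)

end PrivateNbhd

section WellDominated

variable {V : Type*} [Finite V] {X : SimpleGraph V} {I : Set V} {a c v w z : V}

theorem ncard_eq_of_minDom_of_wellDom [Nontrivial V] (hX : X.Preconnected)
    (hwd : WellDom (pathGraph 3 □ X)) {S : Set (Fin 3 × V)}
    (hS : MinDom (pathGraph 3 □ X) S) : S.ncard = Nat.card V := by
  obtain ⟨I, hI, hdom, -⟩ := exists_indepSet_dominates (G := X) (S := ∅) (by simp [IndepSet])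
  rw [hwd S _ hS (minDom_layers_compl hI hdom hX.exists_adj_of_nontrivial), ncard_layers_three,
    Set.ncard_empty, add_zero, Set.ncard_add_ncard_compl]

theorem three_mul_ncard_eq (hmin : ∀ S, MinDom (pathGraph 3 □ X) S → S.ncard = Nat.card V)
    (hI : IndepSet X I) (hdom : Dominates X I) : 3 * I.ncard = Nat.card V := by
  obtain ⟨B, hB, -, hBI, hIB⟩ :=
    exists_indepSet_subset_closedNbhd (G := X) (S := ∅) (U := Iᶜ) (by simp [IndepSet])
      (Set.empty_subset _)
  have hIB' : Disjoint I B := (Set.subset_compl_iff_disjoint_right.mp hBI).symm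
  have hcov : ∀ v, v ∈ closedNbhd X B ∨ v ∈ I := fun v =>
    (em (v ∈ I)).elim Or.inr fun hv => Or.inl (hIB hv)
  have hIBI := hmin _ (minDom_layers_three hI hB hI hIB' hIB'.symm (fun v => Or.inl (hdom v))
    (fun v => (hcov v).imp_right Or.inl) (fun v => Or.inl (hdom v)))
  have hBIB := hmin _ (minDom_layers_three hB hI hB hIB'.symm hIB' hcov
    (fun v => Or.inl (hdom v)) hcov)
  rw [ncard_layers_three] at hIBI hBIB
  omega

theorem IndepSet.three_mul_ncard_le
    (hmin : ∀ S, MinDom (pathGraph 3 □ X) S → S.ncard = Nat.card V) {J : Set V}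
    (hJ : IndepSet X J) : 3 * J.ncard ≤ Nat.card V := by
  obtain ⟨I, hI, hdom, hJI⟩ := exists_indepSet_dominates hJ
  rw [← three_mul_ncard_eq hmin hI hdom]
  have := Set.ncard_le_ncard hJI
  omega

theorem ncard_exchange (hv : v ∈ I) (hz : z ∈ privateNbhd X I v) :
    (insert z (I \ {v})).ncard = I.ncard := by
  rw [Set.ncard_insert_of_notMem (notMem_of_mem_privateNbhd hz),
    Set.ncard_sdiff_singleton_add_one hv]

/-- Otherwise, stacking `I \ {v}` between maximal independent extensions of `{v}` and of
`privateNbhd X I v \ {v}` in `(I \ {v})ᶜ` gives a minimal dominating set with fewer than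
`3 * I.ncard` vertices. -/
theorem not_indepSet_privateNbhd_sdiff
    (hmin : ∀ S, MinDom (pathGraph 3 □ X) S → S.ncard = Nat.card V) (hI : IndepSet X I)
    (hcard : 3 * I.ncard = Nat.card V) (hv : v ∈ I) :
    ¬IndepSet X (privateNbhd X I v \ {v}) := by
  intro hP
  obtain ⟨A, hA, hvA, hAU, hUA⟩ := exists_indepSet_subset_closedNbhd (G := X)
    (U := (I \ {v})ᶜ) (by rintro a rfl b rfl; exact X.irrefl)
    (Set.singleton_subset_iff.mpr fun h => h.2 rfl)
  obtain ⟨C, hC, hPC, hCU, hUC⟩ := exists_indepSet_subset_closedNbhd (U := (I \ {v})ᶜ) hP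
    fun z hz => notMem_of_mem_privateNbhd hz.1
  have hcov : ∀ {D}, (I \ {v})ᶜ ⊆ closedNbhd X D → ∀ z, z ∈ closedNbhd X D ∨ z ∈ I \ {v} :=
    fun hUD z => (em (z ∈ I \ {v})).elim Or.inr fun hz => Or.inl (hUD hz)
  have hmid : ∀ z, z ∈ closedNbhd X (I \ {v}) ∨ z ∈ A ∨ z ∈ C := by
    intro z
    by_cases hz : z ∈ closedNbhd X (I \ {v})
    · exact Or.inl hz
    obtain rfl | hzv := eq_or_ne z v
    · exact Or.inr (Or.inl (hvA rfl))
    · exact Or.inr (Or.inr (hPC ⟨hz, hzv⟩))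
  have h := hmin _ (minDom_layers_three hA (hI.mono Set.sdiff_subset) hC
    (Set.subset_compl_iff_disjoint_right.mp hAU)
    (Set.subset_compl_iff_disjoint_right.mp hCU).symm (hcov hUA) hmid (hcov hUC))
  have hAle := hA.three_mul_ncard_le hmin
  have hCle := hC.three_mul_ncard_le hmin
  have hIv := Set.ncard_sdiff_singleton_add_one hv
  rw [ncard_layers_three] at h
  omega

theorem three_le_ncard_privateNbhd
    (hmin : ∀ S, MinDom (pathGraph 3 □ X) S → S.ncard = Nat.card V) (hI : IndepSet X I)
    (hcard : 3 * I.ncard = Nat.card V) (hv : v ∈ I) : 3 ≤ (privateNbhd X I v).ncard := by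
  have hP := not_indepSet_privateNbhd_sdiff hmin hI hcard hv
  simp only [IndepSet, not_forall, not_not] at hP
  obtain ⟨x, hx, y, hy, hxy⟩ := hP
  have hvxy : ({v, x, y} : Set V).ncard = 3 :=
    Set.ncard_eq_three.mpr ⟨v, x, y, fun h => hx.2 h.symm, fun h => hy.2 h.symm, hxy.ne, rfl⟩
  rw [← hvxy]
  exact Set.ncard_le_ncard (Set.insert_subset (self_mem_privateNbhd hI hv)
    (Set.insert_subset hx.1 (Set.singleton_subset_iff.mpr hy.1)))

theorem isClique_privateNbhd (hmin : ∀ S, MinDom (pathGraph 3 □ X) S → S.ncard = Nat.card V)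
    (hI : IndepSet X I) (hdom : Dominates X I) (hv : v ∈ I) :
    X.IsClique (privateNbhd X I v) := by
  intro z hz z' hz' hne
  rcases eq_or_adj_of_mem_privateNbhd hdom hz with rfl | hvz
  · exact (eq_or_adj_of_mem_privateNbhd hdom hz').resolve_left hne
  rcases eq_or_adj_of_mem_privateNbhd hdom hz' with rfl | -
  · exact hvz.symm
  by_contra hzz'
  have hJ : IndepSet X (insert z' (insert z (I \ {v}))) :=
    (indepSet_exchange hI hz).insert (by
      rintro u (rfl | hu)
      · exact hzz'
      · exact not_adj_of_mem_privateNbhd hz' u hu)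
  have hJle := hJ.three_mul_ncard_le hmin
  have hz'J : z' ∉ insert z (I \ {v}) := by
    rintro (h | h)
    · exact hne h.symm
    · exact notMem_of_mem_privateNbhd hz' h
  rw [Set.ncard_insert_of_notMem hz'J, ncard_exchange hv hz, ← three_mul_ncard_eq hmin hI hdom]
    at hJle
  omega

theorem privateNbhd_partition
    (hmin : ∀ S, MinDom (pathGraph 3 □ X) S → S.ncard = Nat.card V) (hI : IndepSet X I)
    (hdom : Dominates X I) :
    (∀ z, ∃ c ∈ I, z ∈ privateNbhd X I c) ∧ ∀ c ∈ I, (privateNbhd X I c).ncard = 3 := by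
  have hcard := three_mul_ncard_eq hmin hI hdom
  obtain ⟨hcover, hsize⟩ := (pairwiseDisjoint_privateNbhd hdom).biUnion_eq_univ_of_le_ncard
    I.toFinite (fun c hc => three_le_ncard_privateNbhd hmin hI hcard hc) hcard.ge
  rw [Set.eq_univ_iff_forall] at hcover
  exact ⟨fun z => by simpa using hcover z, hsize⟩

theorem privateNbhd_exchange_subset
    (hmin : ∀ S, MinDom (pathGraph 3 □ X) S → S.ncard = Nat.card V) (hI : IndepSet X I)
    (hdom : Dominates X I) (hc : c ∈ I) (hac : a ≠ c) (hz : z ∈ privateNbhd X I a) :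
    privateNbhd X (insert z (I \ {a})) c ⊆ privateNbhd X I c := by
  intro ζ hζ
  obtain ⟨d, hd, hζd⟩ := (privateNbhd_partition hmin hI hdom).1 ζ
  obtain rfl | hdc := eq_or_ne d c
  · exact hζd
  exfalso
  -- `privateNbhd X I d` is a clique meeting `insert z (I \ {a}) \ {c}`, so it lies in `N[·]` of it.
  obtain ⟨r, hr, hrd⟩ : ∃ r ∈ insert z (I \ {a}) \ {c}, r ∈ privateNbhd X I d := by
    obtain rfl | hda := eq_or_ne d a
    · exact ⟨z, ⟨Set.mem_insert _ _,
        fun h => notMem_of_mem_privateNbhd hz (h ▸ ⟨hc, hac.symm⟩)⟩, hz⟩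
    · exact ⟨d, ⟨Or.inr ⟨hd, hda⟩, hdc⟩, self_mem_privateNbhd hI hd⟩
  exact hζ (mem_closedNbhd_of_eq_or_adj hr
    ((eq_or_ne r ζ).imp_right (isClique_privateNbhd hmin hI hdom hd hrd hζd)))

/-- Exchanging `a` for `z` would leave `c` with at most two private vertices. -/
theorem not_adj_of_mem_privateNbhd_of_ne
    (hmin : ∀ S, MinDom (pathGraph 3 □ X) S → S.ncard = Nat.card V) (hI : IndepSet X I)
    (hdom : Dominates X I) (ha : a ∈ I) (hc : c ∈ I) (hac : a ≠ c)
    (hz : z ∈ privateNbhd X I a) (hw : w ∈ privateNbhd X I c) : ¬X.Adj z w := by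
  intro hzw
  obtain ⟨-, hsize⟩ := privateNbhd_partition hmin hI hdom
  have hcard' : 3 * (insert z (I \ {a})).ncard = Nat.card V := by
    rw [ncard_exchange ha hz, three_mul_ncard_eq hmin hI hdom]
  have hzc : z ∈ insert z (I \ {a}) \ {c} :=
    ⟨Set.mem_insert _ _, fun h => notMem_of_mem_privateNbhd hz (h ▸ ⟨hc, hac.symm⟩)⟩
  have hsub : privateNbhd X (insert z (I \ {a})) c ⊆ privateNbhd X I c \ {w} := fun ζ hζ =>
    ⟨privateNbhd_exchange_subset hmin hI hdom hc hac hz hζ,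
      fun h => hζ (Or.inr ⟨z, hzc, (Set.mem_singleton_iff.mp h) ▸ hzw⟩)⟩
  have h3 := three_le_ncard_privateNbhd hmin (indepSet_exchange hI hz) hcard'
    (Or.inr ⟨hc, hac.symm⟩)
  have h2 := Set.ncard_le_ncard hsub
  rw [Set.ncard_sdiff_singleton_of_mem hw, hsize c hc] at h2
  omega

theorem eq_of_mem_of_preconnected (hX : X.Preconnected)
    (hmin : ∀ S, MinDom (pathGraph 3 □ X) S → S.ncard = Nat.card V) (hI : IndepSet X I)
    (hdom : Dominates X I) (ha : a ∈ I) (hc : c ∈ I) : a = c := by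
  by_contra hac
  obtain ⟨d, -, hd₁, hd₂⟩ := (hX a c).some.exists_boundary_dart (privateNbhd X I a)
    (self_mem_privateNbhd hI ha) fun h => notMem_of_mem_privateNbhd h ⟨hc, Ne.symm hac⟩
  obtain ⟨b, hb, hd₂b⟩ := (privateNbhd_partition hmin hI hdom).1 d.snd
  exact not_adj_of_mem_privateNbhd_of_ne hmin hI hdom ha hb (fun h => hd₂ (h ▸ hd₂b)) hd₁ hd₂b
    d.adj

end WellDominated

theorem stmt8 {V : Type*} [Fintype V] (X : SimpleGraph V)
    (hconn : X.Connected) (hcard : 3 ≤ Fintype.card V)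
    (hwd : WellDom (SimpleGraph.pathGraph 3 □ X)) :
    Nonempty (X ≃g completeGraph (Fin 3)) := by
  have : Nontrivial V := Fintype.one_lt_card_iff_nontrivial.mp (by omega)
  have hmin : ∀ S, MinDom (pathGraph 3 □ X) S → S.ncard = Nat.card V := fun S hS =>
    ncard_eq_of_minDom_of_wellDom hconn.preconnected hwd hS
  obtain ⟨I, hI, hdom, -⟩ := exists_indepSet_dominates (G := X) (S := ∅) (by simp [IndepSet])
  obtain ⟨hcover, hsize⟩ := privateNbhd_partition hmin hI hdom
  obtain ⟨c, hc, -⟩ := hcover (Classical.arbitrary V)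
  have huniv : privateNbhd X I c = Set.univ := Set.eq_univ_of_forall fun z => by
    obtain ⟨d, hd, hzd⟩ := hcover z
    rwa [eq_of_mem_of_preconnected hconn.preconnected hmin hI hdom hd hc] at hzd
  have htop : X = ⊤ := isClique_univ.mp (huniv ▸ isClique_privateNbhd hmin hI hdom hc)
  have hV : Fintype.card V = 3 := by
    rw [← Nat.card_eq_fintype_card, ← Set.ncard_univ, ← huniv, hsize c hc]
  subst htop
  exact ⟨Iso.completeGraph (Fintype.equivFinOfCardEq hV)⟩
end

section
/- Let F be a graph of order at least 4 obtained from the complete graph K_3 by attaching some finite number of leaves (pendant vertices) to its vertices, and let X be any connected graph of order at least 3. Then F □ X is not well-dominated. -/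
open SimpleGraph

/-- The graph obtained from the complete graph on `Fin n` by attaching,
for each `x : L`, a leaf `x` to the vertex `f x`. -/
def leafyComplete (n : ℕ) (L : Type*) (f : L → Fin n) :
    SimpleGraph (Fin n ⊕ L) :=
  SimpleGraph.fromRel (fun a b =>
    match a, b with
    | Sum.inl i, Sum.inl j => i ≠ j
    | Sum.inl i, Sum.inr x => f x = i
    | _, _ => False)

/- ============================================================
   Auxiliary material for the proof of `stmt11`.
   ============================================================ -/

set_option linter.unusedSectionVars false

section GenHelpers
open Sum
variable {W : Type*} (G : SimpleGraph W)

/-- minimality of a dominating set via private neighbours -/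
lemma mindom_of_private {S : Set W} (hdom : Dominates G S)
    (priv : ∀ s ∈ S, ∃ w, (w = s ∨ w ∉ S) ∧ ∀ p ∈ S, G.Adj p w → p = s) :
    MinDom G S := by
  refine ⟨hdom, fun T hT hdomT => ?_⟩
  obtain ⟨hTS, hne⟩ := hT
  obtain ⟨s, hsS, hsT⟩ : ∃ s, s ∈ S ∧ s ∉ T := by
    by_contra h; push_neg at h; exact hne (fun t ht => h t ht)
  obtain ⟨w, hw1, hw2⟩ := priv s hsS
  rcases hdomT w with hwT | ⟨u, huT, hadj⟩
  · rcases hw1 with rfl | hwS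
    · exact hsT hwT
    · exact hwS (hTS hwT)
  · exact hsT (hw2 u (hTS huT) hadj ▸ huT)

lemma notWellDom {S T : Set W} (hS : MinDom G S) (hT : MinDom G T)
    (hne : S.ncard ≠ T.ncard) : ¬ WellDom G :=
  fun h => hne (h S T hS hT)

end GenHelpers

/-- cardinality of a `(S \ A) ∪ B` modification differs from that of `S`. -/
lemma ncard_mod_ne {W : Type*} [Finite W] {S A B : Set W}
    (hAS : A ⊆ S) (hBS : Disjoint B S) (hab : A.ncard ≠ B.ncard) :
    ((S \ A) ∪ B).ncard ≠ S.ncard := by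
  have h1 : ((S \ A) ∪ B).ncard = (S.ncard - A.ncard) + B.ncard := by
    rw [Set.ncard_union_eq (by exact Set.disjoint_of_subset_left Set.diff_subset hBS.symm)
        (Set.toFinite _) (Set.toFinite _), Set.ncard_diff hAS]
  have h2 : A.ncard ≤ S.ncard := Set.ncard_le_ncard hAS (Set.toFinite S)
  omega

section Main
open Sum
variable {L : Type*} [Fintype L] (f : L → Fin 3) {V : Type*} [Fintype V] (X : SimpleGraph V)

lemma adj_ll {i j : Fin 3} : (leafyComplete 3 L f).Adj (Sum.inl i) (Sum.inl j) ↔ i ≠ j := by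
  simp only [leafyComplete, SimpleGraph.fromRel_adj, ne_eq, Sum.inl.injEq]; tauto

lemma adj_lr {i : Fin 3} {x : L} : (leafyComplete 3 L f).Adj (Sum.inl i) (Sum.inr x) ↔ f x = i := by
  simp only [leafyComplete, SimpleGraph.fromRel_adj, ne_eq]
  refine ⟨?_, fun h => ⟨Sum.inl_ne_inr, Or.inl h⟩⟩
  rintro ⟨-, h | h⟩
  · exact h
  · exact h.elim

lemma adj_rl {i : Fin 3} {x : L} : (leafyComplete 3 L f).Adj (Sum.inr x) (Sum.inl i) ↔ f x = i := by
  rw [SimpleGraph.adj_comm]; exact adj_lr f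

lemma adj_rr {x y : L} : ¬ (leafyComplete 3 L f).Adj (Sum.inr x) (Sum.inr y) := by
  simp only [leafyComplete, SimpleGraph.fromRel_adj, ne_eq]
  rintro ⟨-, h | h⟩ <;> exact h

abbrev GP := leafyComplete 3 L f □ X

lemma adjG {p q : (Fin 3 ⊕ L) × V} :
    (GP f X).Adj p q ↔
      ((leafyComplete 3 L f).Adj p.1 q.1 ∧ p.2 = q.2) ∨ (X.Adj p.2 q.2 ∧ p.1 = q.1) :=
  SimpleGraph.boxProd_adj

/-- the big minimal dominating set: all support rows in full. -/
def S1 : Set ((Fin 3 ⊕ L) × V) := {p | ∃ i ∈ Set.range f, p.1 = inl i}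

lemma not_inr_mem_S1 {x : L} {v : V} : (inr x, v) ∉ S1 f := by
  rintro ⟨i, -, h⟩; exact (inl_ne_inr h.symm)

lemma S1_dom (ℓ₀ : L) : Dominates (GP f X) (S1 f) := by
  rintro ⟨z | x, v⟩
  · by_cases h : z ∈ Set.range f
    · exact Or.inl ⟨z, h, rfl⟩
    · refine Or.inr ⟨(inl (f ℓ₀), v), ⟨f ℓ₀, ⟨ℓ₀, rfl⟩, rfl⟩, ?_⟩
      exact (adjG f X).2 (Or.inl ⟨(adj_ll f).2 (fun hz => h (hz ▸ ⟨ℓ₀, rfl⟩)), rfl⟩)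
  · exact Or.inr ⟨(inl (f x), v), ⟨f x, ⟨x, rfl⟩, rfl⟩,
      (adjG f X).2 (Or.inl ⟨(adj_lr f).2 rfl, rfl⟩)⟩

lemma S1_priv :
    ∀ s ∈ S1 f, ∃ w : (Fin 3 ⊕ L) × V, (w = s ∨ w ∉ S1 f) ∧
      ∀ p ∈ S1 f, (GP f X).Adj p w → p = s := by
  rintro ⟨z, v⟩ ⟨i, ⟨x, rfl⟩, hz⟩
  dsimp only at hz; subst hz
  refine ⟨(inr x, v), Or.inr (not_inr_mem_S1 f), ?_⟩
  rintro ⟨z', v'⟩ ⟨j, hj, hz'⟩ hadj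
  dsimp only at hz'; subst hz'
  rcases (adjG f X).1 hadj with ⟨h1, h2⟩ | ⟨-, h2⟩
  · dsimp only at h1 h2; subst h2
    rw [adj_lr f] at h1; rw [h1]
  · exact absurd h2 (by simp)

/- ------------- the r = 1 construction ------------- -/

def S2r1 (a b : Fin 3) (u : V) : Set ((Fin 3 ⊕ L) × V) :=
  {p | (p.1 = inl a ∧ p.2 ≠ u) ∨ p = (inl b, u) ∨ ((∃ x, p.1 = inr x) ∧ p.2 = u)}

section R1
variable {a b c : Fin 3} (u : V)

lemma S2r1_dom (hall : ∀ x : L, f x = a) : Dominates (GP f X) (S2r1 (L := L) a b u) := by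
  rintro ⟨z | x, v⟩
  · by_cases hv : v = u
    · subst hv
      by_cases hz : z = b
      · exact Or.inl (Or.inr (Or.inl (by rw [hz])))
      · refine Or.inr ⟨(inl b, v), Or.inr (Or.inl rfl), ?_⟩
        exact (adjG f X).2 (Or.inl ⟨(adj_ll f).2 (fun h => hz h.symm), rfl⟩)
    · by_cases hz : z = a
      · exact Or.inl (Or.inl ⟨by rw [hz], hv⟩)
      · refine Or.inr ⟨(inl a, v), Or.inl ⟨rfl, hv⟩, ?_⟩
        exact (adjG f X).2 (Or.inl ⟨(adj_ll f).2 (fun h => hz h.symm), rfl⟩)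
  · by_cases hv : v = u
    · exact Or.inl (Or.inr (Or.inr ⟨⟨x, rfl⟩, hv⟩))
    · refine Or.inr ⟨(inl a, v), Or.inl ⟨rfl, hv⟩, ?_⟩
      exact (adjG f X).2 (Or.inl ⟨(adj_lr f).2 (hall x), rfl⟩)

lemma S2r1_priv (hba : b ≠ a) (hca : c ≠ a) (hcb : c ≠ b) (hall : ∀ x : L, f x = a) :
    ∀ s ∈ S2r1 (L := L) a b u, ∃ w : (Fin 3 ⊕ L) × V,
      (w = s ∨ w ∉ S2r1 (L := L) a b u) ∧
      ∀ p ∈ S2r1 (L := L) a b u, (GP f X).Adj p w → p = s := by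
  have hcmem : ∀ v : V, (inl c, v) ∉ S2r1 (L := L) a b u := by
    rintro v (⟨h1, -⟩ | h1 | ⟨⟨x, hx⟩, -⟩)
    · exact hca (inl.inj h1)
    · exact hcb (inl.inj (congrArg Prod.fst h1))
    · exact inl_ne_inr hx
  rintro ⟨z, v⟩ hs
  rcases hs with ⟨hz, hv⟩ | heq | ⟨⟨x, hx⟩, hv⟩
  · -- s = (inl a, v), v ≠ u ; witness (inl c, v)
    dsimp only at hz hv; subst hz
    refine ⟨(inl c, v), Or.inr (hcmem v), ?_⟩
    rintro ⟨z', v'⟩ hp hadj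
    rcases (adjG f X).1 hadj with ⟨h1, h2⟩ | ⟨h1, h2⟩
    · dsimp only at h1 h2; subst h2
      rcases hp with ⟨hz', -⟩ | heq' | ⟨⟨y, hy⟩, hv'⟩
      · dsimp only at hz'; rw [hz']
      · exact absurd (congrArg Prod.snd heq') hv
      · exact absurd hv' hv
    · dsimp only at h1 h2; subst h2
      exact absurd hp (hcmem v')
  · -- s = (inl b, u) ; witness (inl c, u)
    rw [Prod.ext_iff] at heq
    obtain ⟨hz, hv⟩ := heq; dsimp only at hz hv; subst hz; subst hv
    refine ⟨(inl c, v), Or.inr (hcmem v), ?_⟩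
    rintro ⟨z', v'⟩ hp hadj
    rcases (adjG f X).1 hadj with ⟨h1, h2⟩ | ⟨h1, h2⟩
    · dsimp only at h1 h2; subst h2
      rcases hp with ⟨hz', hv'⟩ | heq' | ⟨⟨y, hy⟩, hv'⟩
      · exact absurd rfl hv'
      · exact heq'
      · dsimp only at hy hv'; subst hy
        rw [adj_rl f] at h1
        exact absurd (hall y ▸ h1 : (a : Fin 3) = c) (fun h => hca h.symm)
    · dsimp only at h1 h2; subst h2
      exact absurd hp (hcmem v')
  · -- s = (inr x, u) ; witness itself
    dsimp only at hx hv; subst hx; subst hv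
    refine ⟨(inr x, v), Or.inl rfl, ?_⟩
    rintro ⟨z', v'⟩ hp hadj
    rcases (adjG f X).1 hadj with ⟨h1, h2⟩ | ⟨h1, h2⟩
    · dsimp only at h1 h2; subst h2
      rcases hp with ⟨hz', hv'⟩ | heq' | ⟨⟨y, hy⟩, hv'⟩
      · exact absurd rfl hv'
      · rw [show z' = inl b from congrArg Prod.fst heq'] at h1
        rw [adj_lr f] at h1
        exact absurd (hall x ▸ h1 : (a : Fin 3) = b) (fun h => hba h.symm)
      · dsimp only at hy; subst hy
        exact absurd h1 (adj_rr f)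
    · dsimp only at h1 h2; subst h2
      rcases hp with ⟨hz', -⟩ | heq' | ⟨-, hv'⟩
      · exact absurd hz' (by simp)
      · exact absurd (congrArg Prod.fst heq') (by simp)
      · dsimp only at hv'; subst hv'
        exact absurd h1 X.irrefl

end R1

/- ------------- the one/two-center construction (r ≥ 2) ------------- -/

/-- closed neighbourhood of a set of vertices of `X`, as a set -/
def NU (U : Set V) : Set V := {v | v ∈ U ∨ ∃ u ∈ U, X.Adj u v}

/-- the modified dominating set: support rows, with the `a'` row deleted over `N[U]`,
plus all leaves at `a'` over the columns of `U`. -/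
def S2U (a' : Fin 3) (U : Set V) : Set ((Fin 3 ⊕ L) × V) :=
  {p | (∃ i ∈ Set.range f, p.1 = inl i ∧ ¬(i = a' ∧ p.2 ∈ NU X U)) ∨
       (∃ x, f x = a' ∧ p.1 = inr x ∧ p.2 ∈ U)}

section OneC
variable {a' : Fin 3} {U : Set V}

lemma S2U_dom {x₂ : L} (hx₂ : f x₂ ≠ a') : Dominates (GP f X) (S2U f X a' U) := by
  rintro ⟨z | x, v⟩
  · by_cases hz : z ∈ Set.range f
    · by_cases h : z = a' ∧ v ∈ NU X U
      · refine Or.inr ⟨(inl (f x₂), v), Or.inl ⟨f x₂, ⟨x₂, rfl⟩, rfl, fun hh => hx₂ hh.1⟩, ?_⟩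
        exact (adjG f X).2 (Or.inl ⟨(adj_ll f).2 (fun hh => hx₂ (hh.trans h.1)), rfl⟩)
      · exact Or.inl (Or.inl ⟨z, hz, rfl, h⟩)
    · refine Or.inr ⟨(inl (f x₂), v), Or.inl ⟨f x₂, ⟨x₂, rfl⟩, rfl, fun hh => hx₂ hh.1⟩, ?_⟩
      exact (adjG f X).2 (Or.inl ⟨(adj_ll f).2 (fun hh => hz (hh ▸ ⟨x₂, rfl⟩)), rfl⟩)
  · by_cases hfx : f x = a'
    · rcases em (v ∈ U) with hvU | hvU
      · exact Or.inl (Or.inr ⟨x, hfx, rfl, hvU⟩)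
      · rcases em (v ∈ NU X U) with hvN | hvN
        · rcases hvN with hvU' | ⟨u, huU, hadj⟩
          · exact absurd hvU' hvU
          · refine Or.inr ⟨(inr x, u), Or.inr ⟨x, hfx, rfl, huU⟩, ?_⟩
            exact (adjG f X).2 (Or.inr ⟨hadj, rfl⟩)
        · refine Or.inr ⟨(inl a', v), Or.inl ⟨a', ⟨x, hfx⟩, rfl, fun hh => hvN hh.2⟩, ?_⟩
          exact (adjG f X).2 (Or.inl ⟨(adj_lr f).2 hfx, rfl⟩)
    · refine Or.inr ⟨(inl (f x), v), Or.inl ⟨f x, ⟨x, rfl⟩, rfl, fun hh => hfx hh.1⟩, ?_⟩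
      exact (adjG f X).2 (Or.inl ⟨(adj_lr f).2 rfl, rfl⟩)

lemma S2U_priv (hUind : ∀ u ∈ U, ∀ u' ∈ U, ¬ X.Adj u u') :
    ∀ s ∈ S2U f X a' U, ∃ w : (Fin 3 ⊕ L) × V,
      (w = s ∨ w ∉ S2U f X a' U) ∧
      ∀ p ∈ S2U f X a' U, (GP f X).Adj p w → p = s := by
  rintro ⟨z, v⟩ hs
  rcases hs with ⟨i, hi, hz, hni⟩ | ⟨x, hfx, hz, hvU⟩
  · -- s = (inl i, v) with i a support, not deleted
    obtain ⟨xi, hxi⟩ := hi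
    dsimp only at hz hni; subst hz
    refine ⟨(inr xi, v), Or.inr ?_, ?_⟩
    · rintro (⟨j, -, hj, -⟩ | ⟨y, hfy, hy, hvU'⟩)
      · exact inl_ne_inr hj.symm
      · dsimp only at hy hvU'
        exact hni ⟨(inr.inj hy ▸ hfy : f xi = a') ▸ hxi.symm ▸ rfl, Or.inl hvU'⟩
    · rintro ⟨z', v'⟩ hp hadj
      rcases (adjG f X).1 hadj with ⟨h1, h2⟩ | ⟨h1, h2⟩
      · dsimp only at h1 h2; subst h2
        rcases hp with ⟨j, -, hj, -⟩ | ⟨y, hfy, hy, hvU'⟩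
        · dsimp only at hj; rw [hj] at h1 ⊢
          rw [adj_lr f] at h1
          rw [hxi] at h1; rw [h1]
        · dsimp only at hy; rw [hy] at h1
          exact absurd h1 (adj_rr f)
      · dsimp only at h1 h2; subst h2
        rcases hp with ⟨j, -, hj, -⟩ | ⟨y, hfy, hy, hvU'⟩
        · exact absurd hj (by simp)
        · dsimp only at hy hvU'
          have hyx : y = xi := (inr.inj hy).symm
          subst hyx
          refine absurd (Or.inr ⟨v', hvU', h1⟩ : v ∈ NU X U) (fun hvN => ?_)
          exact hni ⟨by rw [← hxi]; exact hfy, hvN⟩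
  · -- s = (inr x, v) with f x = a', v ∈ U : witness itself
    dsimp only at hz hvU; subst hz
    refine ⟨(inr x, v), Or.inl rfl, ?_⟩
    rintro ⟨z', v'⟩ hp hadj
    rcases (adjG f X).1 hadj with ⟨h1, h2⟩ | ⟨h1, h2⟩
    · dsimp only at h1 h2; subst h2
      rcases hp with ⟨j, -, hj, hnj⟩ | ⟨y, hfy, hy, hvU'⟩
      · dsimp only at hj hnj; rw [hj] at h1
        rw [adj_lr f] at h1
        exact absurd ⟨h1.symm.trans hfx, Or.inl hvU⟩ hnj
      · dsimp only at hy; rw [hy] at h1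
        exact absurd h1 (adj_rr f)
    · dsimp only at h1 h2; subst h2
      rcases hp with ⟨j, -, hj, -⟩ | ⟨y, hfy, hy, hvU'⟩
      · exact absurd hj (by simp)
      · dsimp only at hy hvU'
        exact absurd h1 (hUind v' hvU' v hvU)

end OneC

/- ------------- the universal-vertex construction ------------- -/

def S2univ (w : V) : Set ((Fin 3 ⊕ L) × V) := {p | p.2 = w}

section Univ
variable {w : V}

lemma S2univ_dom (huniv : ∀ v : V, v ≠ w → X.Adj w v) :
    Dominates (GP f X) (S2univ (L := L) w) := by
  rintro ⟨z, v⟩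
  by_cases hv : v = w
  · exact Or.inl hv
  · exact Or.inr ⟨(z, w), rfl, (adjG f X).2 (Or.inr ⟨huniv v hv, rfl⟩)⟩

lemma S2univ_priv {v₀ : V} (hv₀ : v₀ ≠ w) :
    ∀ s ∈ S2univ (L := L) w, ∃ q : (Fin 3 ⊕ L) × V,
      (q = s ∨ q ∉ S2univ (L := L) w) ∧
      ∀ p ∈ S2univ (L := L) w, (GP f X).Adj p q → p = s := by
  rintro ⟨z, v⟩ hs
  have hvw : v = w := hs
  subst hvw
  refine ⟨(z, v₀), Or.inr hv₀, ?_⟩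
  rintro ⟨z', v'⟩ hp hadj
  have hv'w : v' = v := hp
  subst hv'w
  rcases (adjG f X).1 hadj with ⟨-, h2⟩ | ⟨-, h2⟩
  · exact absurd h2.symm hv₀
  · dsimp only at h2; rw [h2]

end Univ

/- ------------- induced P₃ ------------- -/

/-- a connected non-complete graph contains an induced P₃ -/
lemma exists_P3 (hconn : X.Connected) {x y : V} (hxy : x ≠ y) (hnadj : ¬ X.Adj x y) :
    ∃ u m u' : V, X.Adj u m ∧ X.Adj m u' ∧ ¬ X.Adj u u' ∧ u ≠ u' := by
  classical
  obtain ⟨p⟩ := hconn x y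
  have H : ∀ (n : ℕ) (x : V), x ≠ y → ¬ X.Adj x y → ∀ p : X.Walk x y, p.length ≤ n →
      ∃ u m u' : V, X.Adj u m ∧ X.Adj m u' ∧ ¬ X.Adj u u' ∧ u ≠ u' := by
    intro n
    induction n with
    | zero =>
      intro x hxy hnadj p hl
      cases p with
      | nil => exact absurd rfl hxy
      | cons h q => simp [SimpleGraph.Walk.length_cons] at hl
    | succ n ih =>
      intro x hxy hnadj p hl
      cases p with
      | nil => exact absurd rfl hxy
      | cons h q =>
        rename_i z
        cases q with
        | nil => exact absurd h hnadj
        | cons h2 q2 =>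
          rename_i t
          simp only [SimpleGraph.Walk.length_cons] at hl
          by_cases hxt : x = t
          · subst hxt
            exact ih x hxy hnadj q2 (by omega)
          · by_cases hadj : X.Adj x t
            · exact ih x hxy hnadj (SimpleGraph.Walk.cons hadj q2)
                (by simp only [SimpleGraph.Walk.length_cons]; omega)
            · exact ⟨x, z, t, h, h2, hadj, hxt⟩
  exact H p.length x hxy hnadj p le_rfl

/- ------------- counting helpers ------------- -/

lemma ncard_row {z : Fin 3 ⊕ L} {s : Set V} :
    ((fun v => ((z, v) : (Fin 3 ⊕ L) × V)) '' s).ncard = s.ncard :=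
  Set.ncard_image_of_injective s (fun v w h => (Prod.ext_iff.1 h).2)

lemma ncard_colR {u : V} {s : Set L} :
    ((fun x => ((inr x, u) : (Fin 3 ⊕ L) × V)) '' s).ncard = s.ncard :=
  Set.ncard_image_of_injective s (fun i j h => inr.inj (Prod.ext_iff.1 h).1)

section R1eq
variable {a b : Fin 3} {u : V}

lemma range_eq (ℓ₀ : L) (hall : ∀ x : L, f x = a) : Set.range f = {a} := by
  ext i
  constructor
  · rintro ⟨x, rfl⟩; exact (hall x)
  · rintro rfl; exact ⟨ℓ₀, hall ℓ₀⟩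

lemma S2r1_eq (ℓ₀ : L) (hall : ∀ x : L, f x = a) (hba : b ≠ a) :
    S2r1 (L := L) a b u =
      (S1 f \ {((inl a : Fin 3 ⊕ L), u)}) ∪
      ({((inl b : Fin 3 ⊕ L), u)} ∪ (fun x : L => ((inr x : Fin 3 ⊕ L), u)) '' Set.univ) := by
  have hr := range_eq f ℓ₀ hall
  ext ⟨z | x, v⟩ <;>
    simp [S2r1, S1, hr, Prod.ext_iff, eq_comm (a := v) (b := u)] <;>
    tauto

lemma S2r1_A_subset (ℓ₀ : L) (hall : ∀ x : L, f x = a) :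
    ({((inl a : Fin 3 ⊕ L), u)} : Set ((Fin 3 ⊕ L) × V)) ⊆ S1 f := by
  rintro p rfl; exact ⟨a, ⟨ℓ₀, hall ℓ₀⟩, rfl⟩

lemma S2r1_B_disj (hall : ∀ x : L, f x = a) (hba : b ≠ a) :
    Disjoint (({((inl b : Fin 3 ⊕ L), u)} ∪ (fun x : L => ((inr x : Fin 3 ⊕ L), u)) '' Set.univ))
      (S1 f) := by
  rw [Set.disjoint_left]
  rintro p (rfl | ⟨x, -, rfl⟩) ⟨i, ⟨y, hy⟩, hp⟩
  · exact hba (by rw [hall y] at hy; exact (inl.inj hp).symm ▸ (hy ▸ rfl))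
  · exact inl_ne_inr hp.symm

lemma S2r1_card_ne (ℓ₀ : L) :
    (({((inl a : Fin 3 ⊕ L), u)} : Set ((Fin 3 ⊕ L) × V))).ncard ≠
      (({((inl b : Fin 3 ⊕ L), u)} ∪ (fun x : L => ((inr x : Fin 3 ⊕ L), u)) '' Set.univ)).ncard := by
  rw [Set.ncard_singleton]
  intro h
  have : 1 < (({((inl b : Fin 3 ⊕ L), u)} ∪
      (fun x : L => ((inr x : Fin 3 ⊕ L), u)) '' Set.univ)).ncard := by
    rw [Set.one_lt_ncard_iff (Set.toFinite _)]
    exact ⟨(inl b, u), (inr ℓ₀, u), Or.inl rfl, Or.inr ⟨ℓ₀, trivial, rfl⟩, by simp⟩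
  omega

end R1eq

section S2Ueq
variable {a' : Fin 3} {U : Set V}

lemma S2U_eq :
    S2U f X a' U =
      (S1 f \ (fun v => ((inl a' : Fin 3 ⊕ L), v)) '' (NU X U)) ∪
      {p : (Fin 3 ⊕ L) × V | ∃ x, f x = a' ∧ p.1 = inr x ∧ p.2 ∈ U} := by
  ext ⟨z | x, v⟩ <;>
    simp [S2U, S1, Prod.ext_iff] <;>
    aesop

lemma S2U_A_subset {x₁ : L} (hx₁ : f x₁ = a') :
    (fun v => ((inl a' : Fin 3 ⊕ L), v)) '' (NU X U) ⊆ S1 f := by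
  rintro p ⟨v, -, rfl⟩; exact ⟨a', ⟨x₁, hx₁⟩, rfl⟩

lemma S2U_B_disj :
    Disjoint {p : (Fin 3 ⊕ L) × V | ∃ x, f x = a' ∧ p.1 = inr x ∧ p.2 ∈ U} (S1 f) := by
  rw [Set.disjoint_left]
  rintro p ⟨x, -, hp, -⟩ ⟨i, -, hp'⟩
  rw [hp'] at hp
  exact inl_ne_inr hp

end S2Ueq

end Main

theorem stmt11 {L : Type*} [Fintype L] (f : L → Fin 3)
    (hL : 1 ≤ Fintype.card L)
    {V : Type*} [Fintype V] (X : SimpleGraph V)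
    (hconn : X.Connected) (hcard : 3 ≤ Fintype.card V) :
    ¬ WellDom (leafyComplete 3 L f □ X) := by
  classical
  obtain ⟨ℓ₀⟩ : Nonempty L := Fintype.card_pos_iff.mp (by omega)
  obtain ⟨u⟩ : Nonempty V := Fintype.card_pos_iff.mp (by omega)
  have hS1 : MinDom (GP f X) (S1 f) :=
    mindom_of_private _ (S1_dom f X ℓ₀) (S1_priv f X)
  by_cases hall : ∀ x : L, f x = f ℓ₀
  · -- r = 1
    set a := f ℓ₀ with ha
    have h3 : ∀ a' : Fin 3, ∃ b c : Fin 3, b ≠ a' ∧ c ≠ a' ∧ c ≠ b := by decide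
    obtain ⟨b, c, hba, hca, hcb⟩ := h3 a
    have hS2 : MinDom (GP f X) (S2r1 (L := L) a b u) :=
      mindom_of_private _ (S2r1_dom f X u hall) (S2r1_priv f X u hba hca hcb hall)
    refine notWellDom _ hS1 hS2 (Ne.symm ?_)
    rw [S2r1_eq f ℓ₀ hall hba]
    exact ncard_mod_ne (S2r1_A_subset f ℓ₀ hall) (S2r1_B_disj f hall hba) (S2r1_card_ne ℓ₀)
  · push_neg at hall
    obtain ⟨x₀, hx₀⟩ := hall
    by_cases hA : ∃ a' : Fin 3, (∃ x₁ : L, f x₁ = a') ∧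
        ∃ u' : V, ({x : L | f x = a'} : Set L).ncard ≠ (NU X {u'}).ncard
    · -- one-center case
      obtain ⟨a', ⟨x₁, hx₁⟩, u', hkne⟩ := hA
      obtain ⟨x₂, hx₂⟩ : ∃ x₂ : L, f x₂ ≠ a' := by
        by_cases h : f ℓ₀ = a'
        · exact ⟨x₀, fun hh => hx₀ (hh.trans h.symm)⟩
        · exact ⟨ℓ₀, h⟩
      have hUind : ∀ z ∈ ({u'} : Set V), ∀ z' ∈ ({u'} : Set V), ¬ X.Adj z z' := by
        rintro z rfl z' rfl; exact X.irrefl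
      have hS2 : MinDom (GP f X) (S2U f X a' {u'}) :=
        mindom_of_private _ (S2U_dom f X hx₂) (S2U_priv f X hUind)
      refine notWellDom _ hS1 hS2 (Ne.symm ?_)
      rw [S2U_eq f X]
      refine ncard_mod_ne (S2U_A_subset f X hx₁) (S2U_B_disj f) ?_
      have hB : ({p : (Fin 3 ⊕ L) × V | ∃ x, f x = a' ∧ p.1 = Sum.inr x ∧ p.2 ∈ ({u'} : Set V)})
          = (fun x : L => ((Sum.inr x : Fin 3 ⊕ L), u')) '' {x : L | f x = a'} := by
        ext ⟨z | x, v⟩ <;> simp [Prod.ext_iff] <;> aesop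
      rw [ncard_row, hB, ncard_colR]
      exact fun h => hkne (h.symm)
    · push_neg at hA
      by_cases hcomp : ∀ v w : V, v ≠ w → X.Adj v w
      · -- X complete : universal construction
        have hNUuniv : NU X {u} = Set.univ := by
          ext v
          simp only [NU, Set.mem_setOf_eq, Set.mem_singleton_iff, Set.mem_univ, iff_true]
          by_cases hv : v = u
          · exact Or.inl hv
          · exact Or.inr ⟨u, rfl, hcomp u v (fun h => hv h.symm)⟩
        have hfib : ∀ i : Fin 3, (∃ x : L, f x = i) →
            ({x : L | f x = i} : Set L).ncard = Fintype.card V := by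
          intro i hi
          have := hA i hi u
          rw [this, hNUuniv, Set.ncard_univ, Nat.card_eq_fintype_card]
        have huniv : ∀ v : V, v ≠ u → X.Adj u v := fun v hv => hcomp u v (fun h => hv h.symm)
        have hv₀ : ∃ v₀ : V, v₀ ≠ u := Fintype.exists_ne_of_one_lt_card (by omega) u
        obtain ⟨v₀, hv₀⟩ := hv₀
        have hS2 : MinDom (GP f X) (S2univ (L := L) u) :=
          mindom_of_private _ (S2univ_dom f X huniv) (S2univ_priv f X hv₀)
        refine notWellDom _ hS1 hS2 ?_
        -- compute the sizes
        have hS2card : (S2univ (L := L) (V := V) u).ncard = 3 + Fintype.card L := by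
          have : S2univ (L := L) (V := V) u = (fun z : Fin 3 ⊕ L => (z, u)) '' Set.univ := by
            ext ⟨z, v⟩; simp [S2univ, Prod.ext_iff, eq_comm]
          rw [this, Set.ncard_image_of_injective _ (fun z z' h => (Prod.ext_iff.1 h).1),
            Set.ncard_univ, Nat.card_eq_fintype_card, Fintype.card_sum, Fintype.card_fin]
        set a := f ℓ₀ with ha
        set a₂ := f x₀ with ha₂
        have hane : a₂ ≠ a := hx₀
        have h3 : ∀ p q : Fin 3, q ≠ p → ∃ c : Fin 3, c ≠ p ∧ c ≠ q ∧
            ∀ i : Fin 3, i = p ∨ i = q ∨ i = c := by decide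
        obtain ⟨c, hca, hca₂, htri⟩ := h3 a a₂ hane
        set n := Fintype.card V with hn
        have hrow : ∀ i : Fin 3,
            ((fun v : V => ((Sum.inl i : Fin 3 ⊕ L), v)) '' Set.univ).ncard = n := by
          intro i
          rw [ncard_row, Set.ncard_univ, Nat.card_eq_fintype_card]
        have hfa : ({x : L | f x = a} : Set L).ncard = n := hfib a ⟨ℓ₀, rfl⟩
        have hfa₂ : ({x : L | f x = a₂} : Set L).ncard = n := hfib a₂ ⟨x₀, rfl⟩
        have hdisj12 : Disjoint ({x : L | f x = a} : Set L) {x : L | f x = a₂} := by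
          rw [Set.disjoint_left]; intro x h1 h2
          exact hane ((h2 : f x = a₂).symm.trans (h1 : f x = a))
        by_cases hc : ∃ x : L, f x = c
        · -- all three rows are support rows
          have hS1eq : S1 f = (fun v : V => ((Sum.inl a : Fin 3 ⊕ L), v)) '' Set.univ ∪
              ((fun v : V => ((Sum.inl a₂ : Fin 3 ⊕ L), v)) '' Set.univ ∪
               (fun v : V => ((Sum.inl c : Fin 3 ⊕ L), v)) '' Set.univ) := by
            ext ⟨z | x, v⟩
            · simp only [S1, Set.mem_setOf_eq, Set.mem_union, Set.mem_image, Set.mem_univ,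
                true_and, Prod.ext_iff, Sum.inl.injEq]
              constructor
              · rintro ⟨i, -, hz⟩
                rcases htri z with h | h | h
                · exact Or.inl ⟨v, h.symm, rfl⟩
                · exact Or.inr (Or.inl ⟨v, h.symm, rfl⟩)
                · exact Or.inr (Or.inr ⟨v, h.symm, rfl⟩)
              · rintro (⟨v', h1, h2⟩ | ⟨v', h1, h2⟩ | ⟨v', h1, h2⟩)
                · exact ⟨a, ⟨ℓ₀, rfl⟩, by rw [h1]⟩
                · exact ⟨a₂, ⟨x₀, rfl⟩, by rw [h1]⟩
                · exact ⟨c, hc, by rw [h1]⟩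
            · simp [S1, Prod.ext_iff]
          have hd1 : Disjoint ((fun v : V => ((Sum.inl a : Fin 3 ⊕ L), v)) '' Set.univ)
              ((fun v : V => ((Sum.inl a₂ : Fin 3 ⊕ L), v)) '' Set.univ ∪
               (fun v : V => ((Sum.inl c : Fin 3 ⊕ L), v)) '' Set.univ) := by
            rw [Set.disjoint_left]
            rintro p ⟨v, -, rfl⟩ (⟨v', -, h⟩ | ⟨v', -, h⟩)
            · exact hane (Sum.inl.inj (Prod.ext_iff.1 h).1)
            · exact hca (Sum.inl.inj (Prod.ext_iff.1 h).1)
          have hd2 : Disjoint ((fun v : V => ((Sum.inl a₂ : Fin 3 ⊕ L), v)) '' Set.univ)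
              ((fun v : V => ((Sum.inl c : Fin 3 ⊕ L), v)) '' Set.univ) := by
            rw [Set.disjoint_left]
            rintro p ⟨v, -, rfl⟩ ⟨v', -, h⟩
            exact hca₂ (Sum.inl.inj (Prod.ext_iff.1 h).1)
          have hS1card : (S1 f (V := V)).ncard = n + (n + n) := by
            rw [hS1eq, Set.ncard_union_eq hd1 (Set.toFinite _) (Set.toFinite _),
              Set.ncard_union_eq hd2 (Set.toFinite _) (Set.toFinite _), hrow, hrow, hrow]
          -- card L ≥ 3n
          obtain ⟨xc, hxc⟩ := hc
          have hfc : ({x : L | f x = c} : Set L).ncard = n := hfib c ⟨xc, hxc⟩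
          have hdisj13 : Disjoint ({x : L | f x = a} ∪ {x : L | f x = a₂} : Set L)
              {x : L | f x = c} := by
            rw [Set.disjoint_left]
            rintro x (h1 | h1) h2
            · exact hca ((h2 : f x = c).symm.trans (h1 : f x = a))
            · exact hca₂ ((h2 : f x = c).symm.trans (h1 : f x = a₂))
          have hL3n : 3 * n ≤ Fintype.card L := by
            have hsub : ({x : L | f x = a} ∪ {x : L | f x = a₂} ∪ {x : L | f x = c} : Set L)
                ⊆ Set.univ := Set.subset_univ _
            have := Set.ncard_le_ncard hsub (Set.toFinite _)
            rw [Set.ncard_univ, Nat.card_eq_fintype_card,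
              Set.ncard_union_eq hdisj13 (Set.toFinite _) (Set.toFinite _),
              Set.ncard_union_eq hdisj12 (Set.toFinite _) (Set.toFinite _),
              hfa, hfa₂, hfc] at this
            omega
          rw [hS1card, hS2card]
          omega
        · -- only two support rows
          push_neg at hc
          have hS1eq : S1 f = (fun v : V => ((Sum.inl a : Fin 3 ⊕ L), v)) '' Set.univ ∪
              (fun v : V => ((Sum.inl a₂ : Fin 3 ⊕ L), v)) '' Set.univ := by
            ext ⟨z | x, v⟩
            · simp only [S1, Set.mem_setOf_eq, Set.mem_union, Set.mem_image, Set.mem_univ,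
                true_and, Prod.ext_iff, Sum.inl.injEq]
              constructor
              · rintro ⟨i, ⟨y, hy⟩, hz⟩
                rcases htri z with h | h | h
                · exact Or.inl ⟨v, h.symm, rfl⟩
                · exact Or.inr ⟨v, h.symm, rfl⟩
                · exact absurd (hz ▸ hy : f y = z) (h ▸ hc y)
              · rintro (⟨v', h1, h2⟩ | ⟨v', h1, h2⟩)
                · exact ⟨a, ⟨ℓ₀, rfl⟩, by rw [h1]⟩
                · exact ⟨a₂, ⟨x₀, rfl⟩, by rw [h1]⟩
            · simp [S1, Prod.ext_iff]
          have hd1 : Disjoint ((fun v : V => ((Sum.inl a : Fin 3 ⊕ L), v)) '' Set.univ)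
              ((fun v : V => ((Sum.inl a₂ : Fin 3 ⊕ L), v)) '' Set.univ) := by
            rw [Set.disjoint_left]
            rintro p ⟨v, -, rfl⟩ ⟨v', -, h⟩
            exact hane (Sum.inl.inj (Prod.ext_iff.1 h).1)
          have hS1card : (S1 f (V := V)).ncard = n + n := by
            rw [hS1eq, Set.ncard_union_eq hd1 (Set.toFinite _) (Set.toFinite _), hrow, hrow]
          have hL2n : 2 * n ≤ Fintype.card L := by
            have hsub : ({x : L | f x = a} ∪ {x : L | f x = a₂} : Set L) ⊆ Set.univ :=
              Set.subset_univ _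
            have := Set.ncard_le_ncard hsub (Set.toFinite _)
            rw [Set.ncard_univ, Nat.card_eq_fintype_card,
              Set.ncard_union_eq hdisj12 (Set.toFinite _) (Set.toFinite _), hfa, hfa₂] at this
            omega
          rw [hS1card, hS2card]
          omega
      · -- X not complete : two-center construction
        push_neg at hcomp
        obtain ⟨y₁, y₂, hy12, hynadj⟩ := hcomp
        obtain ⟨w₁, m, w₂, hw1m, hmw2, hw1w2, hw1w2ne⟩ := exists_P3 X hconn hy12 hynadj
        set a := f ℓ₀ with ha
        obtain ⟨x₂, hx₂⟩ : ∃ x₂ : L, f x₂ ≠ a := ⟨x₀, hx₀⟩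
        set U : Set V := {w₁, w₂} with hU
        have hUind : ∀ z ∈ U, ∀ z' ∈ U, ¬ X.Adj z z' := by
          rintro z (rfl | rfl) z' (rfl | rfl)
          · exact X.irrefl
          · exact hw1w2
          · exact fun h => hw1w2 h.symm
          · exact X.irrefl
        have hS2 : MinDom (GP f X) (S2U f X a U) :=
          mindom_of_private _ (S2U_dom f X hx₂) (S2U_priv f X hUind)
        refine notWellDom _ hS1 hS2 (Ne.symm ?_)
        rw [S2U_eq f X]
        refine ncard_mod_ne (S2U_A_subset f X (rfl : f ℓ₀ = a)) (S2U_B_disj f) ?_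
        -- sizes
        set k := ({x : L | f x = a} : Set L).ncard with hk
        have hNU12 : NU X U = NU X {w₁} ∪ NU X {w₂} := by
          ext v
          simp only [NU, hU, Set.mem_setOf_eq, Set.mem_union, Set.mem_insert_iff,
            Set.mem_singleton_iff]
          aesop
        have hk1 : (NU X {w₁}).ncard = k := (hA a ⟨ℓ₀, rfl⟩ w₁).symm
        have hk2 : (NU X {w₂}).ncard = k := (hA a ⟨ℓ₀, rfl⟩ w₂).symm
        have hm : m ∈ NU X {w₁} ∩ NU X {w₂} :=
          ⟨Or.inr ⟨w₁, rfl, hw1m⟩, Or.inr ⟨w₂, rfl, hmw2.symm⟩⟩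
        have hinter : 1 ≤ (NU X {w₁} ∩ NU X {w₂}).ncard := by
          rw [Nat.one_le_iff_ne_zero]
          intro h
          rw [Set.ncard_eq_zero (Set.toFinite _)] at h
          exact absurd (h ▸ hm) (Set.notMem_empty m)
        have hunion := Set.ncard_union_add_ncard_inter (NU X {w₁}) (NU X {w₂})
          (Set.toFinite _) (Set.toFinite _)
        have hAcard : ((fun v => ((Sum.inl a : Fin 3 ⊕ L), v)) '' (NU X U)).ncard ≤ 2 * k - 1 ∧
            1 ≤ 2 * k := by
          constructor
          · rw [ncard_row, hNU12]
            omega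
          · have hmem : ℓ₀ ∈ ({x : L | f x = a} : Set L) := rfl
            have : 0 < k := by
              rw [hk, Set.ncard_pos (Set.toFinite _)]
              exact ⟨ℓ₀, hmem⟩
            omega
        have hBcard : ({p : (Fin 3 ⊕ L) × V | ∃ x, f x = a ∧ p.1 = Sum.inr x ∧ p.2 ∈ U}).ncard
            = k + k := by
          have hBeq : {p : (Fin 3 ⊕ L) × V | ∃ x, f x = a ∧ p.1 = Sum.inr x ∧ p.2 ∈ U} =
              (fun x : L => ((Sum.inr x : Fin 3 ⊕ L), w₁)) '' {x : L | f x = a} ∪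
              (fun x : L => ((Sum.inr x : Fin 3 ⊕ L), w₂)) '' {x : L | f x = a} := by
            ext ⟨z | x, v⟩ <;> simp [hU, Prod.ext_iff] <;> aesop
          have hdisj : Disjoint ((fun x : L => ((Sum.inr x : Fin 3 ⊕ L), w₁)) '' {x : L | f x = a})
              ((fun x : L => ((Sum.inr x : Fin 3 ⊕ L), w₂)) '' {x : L | f x = a}) := by
            rw [Set.disjoint_left]
            rintro p ⟨x, -, rfl⟩ ⟨x', -, h⟩
            exact hw1w2ne ((Prod.ext_iff.1 h).2).symm
          rw [hBeq, Set.ncard_union_eq hdisj (Set.toFinite _) (Set.toFinite _),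
            ncard_colR, ncard_colR]
        rw [hBcard]
        omega
end

section
/- If G and H are nontrivial connected graphs and G □ H is well-dominated, then γ(G □ H) = γ(G)·|V(H)| = γ(H)·|V(G)|. -/
open SimpleGraph

/-- The domination number of a graph. -/
noncomputable def domNum {V : Type*} (G : SimpleGraph V) : ℕ :=
  sInf {n : ℕ | ∃ S : Set V, Dominates G S ∧ S.ncard = n}

/- ------------------ auxiliary lemmas ------------------- -/

lemma domNum_le {V : Type*} (G : SimpleGraph V) {S : Set V} (h : Dominates G S) :
    domNum G ≤ S.ncard :=
  Nat.sInf_le ⟨S, h, rfl⟩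

lemma exists_domNum {V : Type*} (G : SimpleGraph V) :
    ∃ S : Set V, Dominates G S ∧ S.ncard = domNum G := by
  have hne : {n : ℕ | ∃ S : Set V, Dominates G S ∧ S.ncard = n}.Nonempty :=
    ⟨(Set.univ : Set V).ncard, Set.univ, fun v => Or.inl trivial, rfl⟩
  exact Nat.sInf_mem hne

lemma minDom_of_min {V : Type*} [Fintype V] (G : SimpleGraph V) {S : Set V}
    (hdom : Dominates G S) (hcard : S.ncard = domNum G) : MinDom G S := by
  refine ⟨hdom, fun T hT hTd => ?_⟩
  have h1 := domNum_le G hTd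
  have h2 := Set.ncard_lt_ncard hT (Set.toFinite S)
  omega

/-- The set of ordered adjacent pairs inside `D` (potential function). -/
def adjPairs {V : Type*} (G : SimpleGraph V) (D : Set V) : Set (V × V) :=
  {p : V × V | p.1 ∈ D ∧ p.2 ∈ D ∧ G.Adj p.1 p.2}

lemma swap_step {V : Type*} [Fintype V] (G : SimpleGraph V)
    (hiso : ∀ v : V, ∃ u, G.Adj u v) {D : Set V}
    (hD : Dominates G D) (hcard : D.ncard = domNum G) {v : V} (hv : v ∈ D)
    (hbad : ∀ x, x ∉ D → G.Adj v x → ∃ d ∈ D, d ≠ v ∧ G.Adj d x) :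
    ∃ D' : Set V, Dominates G D' ∧ D'.ncard = domNum G ∧
      (adjPairs G D).ncard < (adjPairs G D').ncard := by
  -- Step A: v has no neighbor in D
  have hA : ∀ d ∈ D, ¬ G.Adj v d := by
    by_contra hcon
    push_neg at hcon
    obtain ⟨d0, hd0, hadj0⟩ := hcon
    have hTd : Dominates G (D \ {v}) := by
      intro x
      rcases hD x with hx | ⟨u, hu, hux⟩
      · by_cases hxv : x = v
        · exact Or.inr ⟨d0, ⟨hd0, by simp [hadj0.ne']⟩, by rw [hxv]; exact hadj0.symm⟩
        · exact Or.inl ⟨hx, by simp [hxv]⟩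
      · by_cases hxD : x ∈ D
        · by_cases hxv : x = v
          · exact Or.inr ⟨d0, ⟨hd0, by simp [hadj0.ne']⟩, by rw [hxv]; exact hadj0.symm⟩
          · exact Or.inl ⟨hxD, by simp [hxv]⟩
        · by_cases huv : u = v
          · obtain ⟨d, hd, hdv, hdx⟩ := hbad x hxD (huv ▸ hux)
            exact Or.inr ⟨d, ⟨hd, by simp [hdv]⟩, hdx⟩
          · exact Or.inr ⟨u, ⟨hu, by simp [huv]⟩, hux⟩
    have h1 := domNum_le G hTd
    have h2 := Set.ncard_lt_ncard (Set.sdiff_singleton_ssubset.mpr hv) (Set.toFinite D)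
    omega
  obtain ⟨u, huv⟩ := hiso v
  have hu : u ∉ D := fun h => hA u h huv.symm
  obtain ⟨d1, hd1, hd1v, hd1u⟩ := hbad u hu huv.symm
  refine ⟨insert u (D \ {v}), ?_, ?_, ?_⟩
  · -- dominating
    intro x
    by_cases hxu : x = u
    · exact Or.inl (by simp [hxu])
    by_cases hxv : x = v
    · exact Or.inr ⟨u, Set.mem_insert u _, hxv ▸ huv⟩
    rcases hD x with hx | ⟨w, hw, hwx⟩
    · exact Or.inl (Set.mem_insert_iff.mpr (Or.inr ⟨hx, by simp [hxv]⟩))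
    · by_cases hwv : w = v
      · have hxD : x ∉ D := by
          intro hxD
          exact hA x hxD (hwv ▸ hwx)
        obtain ⟨d, hd, hdv, hdx⟩ := hbad x hxD (hwv ▸ hwx)
        exact Or.inr ⟨d, Set.mem_insert_iff.mpr (Or.inr ⟨hd, by simp [hdv]⟩), hdx⟩
      · exact Or.inr ⟨w, Set.mem_insert_iff.mpr (Or.inr ⟨hw, by simp [hwv]⟩), hwx⟩
  · rw [Set.ncard_exchange hu hv]; exact hcard
  · -- potential strictly increases
    have hsub : insert (d1, u) (adjPairs G D) ⊆ adjPairs G (insert u (D \ {v})) := by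
      intro p hp
      rcases Set.mem_insert_iff.mp hp with hp | hp
      · rw [hp]
        exact ⟨Set.mem_insert_iff.mpr (Or.inr ⟨hd1, by simp [hd1v]⟩), Set.mem_insert u _, hd1u⟩
      · obtain ⟨h1, h2, h3⟩ := hp
        have hne1 : p.1 ≠ v := fun h => hA p.2 h2 (h ▸ h3)
        have hne2 : p.2 ≠ v := fun h => hA p.1 h1 (h ▸ h3.symm)
        exact ⟨Set.mem_insert_iff.mpr (Or.inr ⟨h1, by simp [hne1]⟩),
          Set.mem_insert_iff.mpr (Or.inr ⟨h2, by simp [hne2]⟩), h3⟩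
    have hnm : (d1, u) ∉ adjPairs G D := fun h => hu h.2.1
    calc (adjPairs G D).ncard < (insert (d1, u) (adjPairs G D)).ncard := by
          rw [Set.ncard_insert_of_notMem hnm (Set.toFinite _)]; omega
      _ ≤ (adjPairs G (insert u (D \ {v}))).ncard :=
          Set.ncard_le_ncard hsub (Set.toFinite _)

/-- Epn property: every vertex of `D` has an external private neighbor. -/
def EpnProp {V : Type*} (G : SimpleGraph V) (D : Set V) : Prop :=
  ∀ v ∈ D, ∃ x, x ∉ D ∧ G.Adj v x ∧ ∀ d ∈ D, G.Adj d x → d = v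

lemma bc_aux {V : Type*} [Fintype V] (G : SimpleGraph V)
    (hiso : ∀ v : V, ∃ u, G.Adj u v) :
    ∀ (k : ℕ) (D : Set V), Dominates G D → D.ncard = domNum G →
      Fintype.card (V × V) ≤ (adjPairs G D).ncard + k →
      ∃ D' : Set V, Dominates G D' ∧ D'.ncard = domNum G ∧ EpnProp G D' := by
  intro k
  induction k with
  | zero =>
    intro D hD hc hk
    refine ⟨D, hD, hc, ?_⟩
    by_contra hbad
    unfold EpnProp at hbad
    push_neg at hbad
    obtain ⟨v, hv, hvb⟩ := hbad
    have hbad' : ∀ x, x ∉ D → G.Adj v x → ∃ d ∈ D, d ≠ v ∧ G.Adj d x := by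
      intro x hx hadj
      obtain ⟨d, hd, hdx, hdv⟩ := hvb x hx hadj
      exact ⟨d, hd, hdv, hdx⟩
    obtain ⟨D', _, _, hlt⟩ := swap_step G hiso hD hc hv hbad'
    have hle : (adjPairs G D').ncard ≤ Fintype.card (V × V) := by
      have := Set.ncard_le_ncard (Set.subset_univ (adjPairs G D')) Set.finite_univ
      rwa [Set.ncard_univ, Nat.card_eq_fintype_card] at this
    omega
  | succ n ih =>
    intro D hD hc hk
    by_cases hgood : EpnProp G D
    · exact ⟨D, hD, hc, hgood⟩
    unfold EpnProp at hgood
    push_neg at hgood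
    obtain ⟨v, hv, hvb⟩ := hgood
    have hbad' : ∀ x, x ∉ D → G.Adj v x → ∃ d ∈ D, d ≠ v ∧ G.Adj d x := by
      intro x hx hadj
      obtain ⟨d, hd, hdx, hdv⟩ := hvb x hx hadj
      exact ⟨d, hd, hdv, hdx⟩
    obtain ⟨D', hD', hc', hlt⟩ := swap_step G hiso hD hc hv hbad'
    exact ih D' hD' hc' (by omega)

/-- Bollobás–Cockayne: an isolate-free graph has a minimum dominating set in which
every vertex has an external private neighbor. -/
lemma bollobas_cockayne {V : Type*} [Fintype V] (G : SimpleGraph V)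
    (hiso : ∀ v : V, ∃ u, G.Adj u v) :
    ∃ D : Set V, Dominates G D ∧ D.ncard = domNum G ∧ EpnProp G D := by
  obtain ⟨S, hS, hSc⟩ := exists_domNum G
  exact bc_aux G hiso (Fintype.card (V × V)) S hS hSc (Nat.le_add_left _ _)

lemma conn_no_isolated {V : Type*} [Fintype V] {G : SimpleGraph V}
    (hG : G.Connected) (h2 : 2 ≤ Fintype.card V) : ∀ v : V, ∃ u, G.Adj u v := by
  intro v
  obtain ⟨w, hw⟩ := Fintype.exists_ne_of_one_lt_card (by omega) v
  obtain ⟨p⟩ := hG.preconnected v w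
  cases p with
  | nil => exact absurd rfl hw
  | cons h q => exact ⟨_, h.symm⟩

lemma minDom_prod_left {V W : Type*} (G : SimpleGraph V) (H : SimpleGraph W)
    {D : Set V} (hdom : Dominates G D) (hepn : EpnProp G D) :
    MinDom (G □ H) (D ×ˢ (Set.univ : Set W)) := by
  constructor
  · rintro ⟨g, h⟩
    rcases hdom g with hg | ⟨d, hd, hdg⟩
    · exact Or.inl ⟨hg, trivial⟩
    · exact Or.inr ⟨(d, h), ⟨hd, trivial⟩, Or.inl ⟨hdg, rfl⟩⟩
  · intro T hT hTd
    obtain ⟨p, hpmem, hpT⟩ := Set.exists_of_ssubset hT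
    have hTsub : T ⊆ D ×ˢ (Set.univ : Set W) := hT.subset
    obtain ⟨x, hxD, hadj, hpriv⟩ := hepn p.1 hpmem.1
    rcases hTd (x, p.2) with hmem | ⟨q, hqT, hqadj⟩
    · exact hxD (hTsub hmem).1
    · rcases hqadj with ⟨hq1, hq2⟩ | ⟨hq1, hq2⟩
      · -- G.Adj q.1 x ∧ q.2 = p.2
        have hq1D : q.1 ∈ D := (hTsub hqT).1
        have : q.1 = p.1 := hpriv q.1 hq1D hq1
        have hqp : q = p := Prod.ext this hq2
        exact hpT (hqp ▸ hqT)
      · -- H.Adj q.2 p.2 ∧ q.1 = x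
        exact hxD ((show q.1 = x from hq2) ▸ (hTsub hqT).1)

lemma minDom_prod_right {V W : Type*} (G : SimpleGraph V) (H : SimpleGraph W)
    {E : Set W} (hdom : Dominates H E) (hepn : EpnProp H E) :
    MinDom (G □ H) ((Set.univ : Set V) ×ˢ E) := by
  constructor
  · rintro ⟨g, h⟩
    rcases hdom h with hh | ⟨e, he, heh⟩
    · exact Or.inl ⟨trivial, hh⟩
    · exact Or.inr ⟨(g, e), ⟨trivial, he⟩, Or.inr ⟨heh, rfl⟩⟩
  · intro T hT hTd
    obtain ⟨p, hpmem, hpT⟩ := Set.exists_of_ssubset hT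
    have hTsub : T ⊆ (Set.univ : Set V) ×ˢ E := hT.subset
    obtain ⟨x, hxE, hadj, hpriv⟩ := hepn p.2 hpmem.2
    rcases hTd (p.1, x) with hmem | ⟨q, hqT, hqadj⟩
    · exact hxE (hTsub hmem).2
    · rcases hqadj with ⟨hq1, hq2⟩ | ⟨hq1, hq2⟩
      · -- G.Adj q.1 p.1 ∧ q.2 = x
        exact hxE ((show q.2 = x from hq2) ▸ (hTsub hqT).2)
      · -- H.Adj q.2 x ∧ q.1 = p.1
        have hq2E : q.2 ∈ E := (hTsub hqT).2
        have : q.2 = p.2 := hpriv q.2 hq2E hq1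
        have hqp : q = p := Prod.ext hq2 this
        exact hpT (hqp ▸ hqT)

lemma ncard_prod_set {V W : Type*} (s : Set V) (t : Set W) :
    (s ×ˢ t).ncard = s.ncard * t.ncard := by
  rw [← Nat.card_coe_set_eq, ← Nat.card_coe_set_eq, ← Nat.card_coe_set_eq,
    Nat.card_congr (Equiv.Set.prod s t), Nat.card_prod]

theorem stmt13 {V W : Type*} [Fintype V] [Fintype W]
    (G : SimpleGraph V) (H : SimpleGraph W)
    (hG : G.Connected) (hH : H.Connected)
    (hGn : 2 ≤ Fintype.card V) (hHn : 2 ≤ Fintype.card W)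
    (hwd : WellDom (G □ H)) :
    domNum (G □ H) = domNum G * Fintype.card W ∧
    domNum (G □ H) = domNum H * Fintype.card V := by
  obtain ⟨DG, hDGdom, hDGcard, hDGepn⟩ := bollobas_cockayne G (conn_no_isolated hG hGn)
  obtain ⟨DH, hDHdom, hDHcard, hDHepn⟩ := bollobas_cockayne H (conn_no_isolated hH hHn)
  obtain ⟨S, hSdom, hScard⟩ := exists_domNum (G □ H)
  have hSmin : MinDom (G □ H) S := minDom_of_min (G □ H) hSdom hScard
  have hu1 : (Set.univ : Set W).ncard = Fintype.card W := by
    rw [Set.ncard_univ, Nat.card_eq_fintype_card]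
  have hu2 : (Set.univ : Set V).ncard = Fintype.card V := by
    rw [Set.ncard_univ, Nat.card_eq_fintype_card]
  constructor
  · have h1 := hwd S (DG ×ˢ (Set.univ : Set W)) hSmin (minDom_prod_left G H hDGdom hDGepn)
    rw [← hScard, h1, ncard_prod_set, hDGcard, hu1]
  · have h2 := hwd S ((Set.univ : Set V) ×ˢ DH) hSmin (minDom_prod_right G H hDHdom hDHepn)
    rw [← hScard, h2, ncard_prod_set, hDHcard, hu2, Nat.mul_comm]
end

section
/- If D is an open irredundant dominating set of a graph X and Y is any graph, then D × V(Y) is a minimal dominating set of the Cartesian product X □ Y. -/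
open SimpleGraph

/-- `D` is open irredundant: every `u ∈ D` has a private neighbor outside `D`. -/
def OpenIrr {V : Type*} (G : SimpleGraph V) (D : Set V) : Prop :=
  ∀ u ∈ D, ∃ w : V, w ∉ D ∧ w ∈ closedNbhd G {u} ∧ w ∉ closedNbhd G (D \ {u})

theorem stmt14 {V W : Type*} (X : SimpleGraph V) (Y : SimpleGraph W)
    (D : Set V) (hdom : Dominates X D) (hoi : OpenIrr X D) :
    MinDom (X □ Y) (D ×ˢ (Set.univ : Set W)) := by
  constructor
  · intro v
    rcases hdom v.1 with h | ⟨u, hu, hadj⟩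
    · exact Or.inl ⟨h, trivial⟩
    · exact Or.inr ⟨(u, v.2), ⟨hu, trivial⟩, Or.inl ⟨hadj, rfl⟩⟩
  · rintro T ⟨hTsub, hTne⟩ hTdom
    obtain ⟨⟨u, w0⟩, huw0, hnT⟩ : ∃ x ∈ D ×ˢ (Set.univ : Set W), x ∉ T := by
      by_contra h
      push_neg at h
      exact hTne fun x hx => h x hx
    obtain ⟨hu, -⟩ := huw0
    obtain ⟨p, hpD, hp1, hp2⟩ := hoi u hu
    have hup : X.Adj u p := by
      rcases hp1 with h | ⟨u', hu', h⟩
      · exact absurd (h ▸ hu) hpD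
      · exact hu' ▸ h
    rcases hTdom (p, w0) with h | ⟨⟨a, b⟩, haT, hadj⟩
    · exact hpD (hTsub h).1
    · have haD : a ∈ D := (hTsub haT).1
      rcases hadj with ⟨hX, hb⟩ | ⟨hY, ha⟩
      · by_cases hau : a = u
        · subst hau; cases hb; exact hnT haT
        · exact hp2 (Or.inr ⟨a, ⟨haD, hau⟩, hX⟩)
      · simp only at ha; exact hpD (ha ▸ haD)
end
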